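/- arXiv:1908.02001 — 10 statements merged into one kernel-verified Lean document; each statement's English description precedes it below -/
import Mathlib

section
/- Let n, m be natural numbers, A : Matrix (Fin n) (Fin n) ℝ a symmetric matrix, B : Matrix (Fin n) (Fin m) ℝ any matrix, and S : Matrix (Fin m) (Fin m) ℝ a switching matrix (a diagonal matrix all of whose diagonal entries are +1 or −1). Set B' := B * S and P := Matrix.fromBlocks 1 0 0 S (the block-diagonal matrix with blocks the n×n identity and S). Then P * P = 1 and Matrix.fromBlocks A B' B'ᵀ (2•1 − B'ᵀ * B') = P * (Matrix.fromBlocks A B Bᵀ (2•1 − Bᵀ * B)) * P, and likewise Matrix.fromBlocks A B' B'ᵀ (B'ᵀ * B' − 2•1) = P * (Matrix.fromBlocks A B Bᵀ (Bᵀ * B − 2•1)) * P. In particular, the combinatorial and spectral total graphs obtained from two orientations of the same signed graph are switching similar. -/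
open Matrix

/-- Reorientation (right multiplication of the incidence matrix by a switching
matrix) yields switching similar combinatorial and spectral total matrices. -/
theorem total_graph_reorientation_switching
    (n m : ℕ) (A : Matrix (Fin n) (Fin n) ℝ) (hA : Aᵀ = A)
    (B : Matrix (Fin n) (Fin m) ℝ) (S : Matrix (Fin m) (Fin m) ℝ)
    (hSdiag : ∀ i j : Fin m, i ≠ j → S i j = 0)
    (hSpm : ∀ i : Fin m, S i i = 1 ∨ S i i = -1) :
    let B' := B * S
    let P : Matrix (Fin n ⊕ Fin m) (Fin n ⊕ Fin m) ℝ := Matrix.fromBlocks 1 0 0 S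
    P * P = 1 ∧
    Matrix.fromBlocks A B' B'ᵀ ((2 : ℝ) • 1 - B'ᵀ * B') =
      P * Matrix.fromBlocks A B Bᵀ ((2 : ℝ) • 1 - Bᵀ * B) * P ∧
    Matrix.fromBlocks A B' B'ᵀ (B'ᵀ * B' - (2 : ℝ) • 1) =
      P * Matrix.fromBlocks A B Bᵀ (Bᵀ * B - (2 : ℝ) • 1) * P := by
  intro B' P
  have hSsymm : Sᵀ = S := by
    ext i j
    by_cases h : i = j
    · subst h; simp [Matrix.transpose_apply]
    · rw [Matrix.transpose_apply, hSdiag j i (Ne.symm h), hSdiag i j h]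
  have hSS : S * S = 1 := by
    ext i j
    rw [Matrix.mul_apply]
    by_cases h : i = j
    · subst h
      rw [Finset.sum_eq_single i]
      · rcases hSpm i with h1 | h1 <;> simp [h1]
      · intro b _ hb; rw [hSdiag i b (Ne.symm hb), zero_mul]
      · simp
    · rw [Finset.sum_eq_zero, Matrix.one_apply_ne h]
      intro b _
      by_cases hib : i = b
      · subst hib; rw [hSdiag i j h, mul_zero]
      · rw [hSdiag i b hib, zero_mul]
  have hPP : P * P = 1 := by
    show Matrix.fromBlocks 1 0 0 S * Matrix.fromBlocks 1 0 0 S = 1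
    rw [Matrix.fromBlocks_multiply]
    simp [hSS, Matrix.fromBlocks_one]
  have hB't : B'ᵀ = S * Bᵀ := by
    show (B * S)ᵀ = S * Bᵀ
    rw [Matrix.transpose_mul, hSsymm]
  have key : ∀ X : Matrix (Fin m) (Fin m) ℝ,
      P * Matrix.fromBlocks A B Bᵀ X * P =
        Matrix.fromBlocks A (B * S) (S * Bᵀ) (S * X * S) := by
    intro X
    show Matrix.fromBlocks 1 0 0 S * Matrix.fromBlocks A B Bᵀ X *
        Matrix.fromBlocks 1 0 0 S = _
    rw [Matrix.fromBlocks_multiply, Matrix.fromBlocks_multiply]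
    congr 1 <;> simp [Matrix.mul_assoc]
  refine ⟨hPP, ?_, ?_⟩ <;>
  · rw [key, hB't]
    congr 1
    simp only [Matrix.mul_sub, Matrix.sub_mul, mul_smul_comm, smul_mul_assoc,
      Matrix.mul_one, hSS, Matrix.mul_assoc, B']
end

section
/- Let n, m be natural numbers, A : Matrix (Fin n) (Fin n) ℝ a symmetric matrix, B : Matrix (Fin n) (Fin m) ℝ any matrix, and S : Matrix (Fin n) (Fin n) ℝ a switching matrix (a diagonal matrix all of whose diagonal entries are +1 or −1). Set A' := S * A * S, B' := S * B, and Q := Matrix.fromBlocks S 0 0 1 (the block-diagonal matrix with blocks S and the m×m identity). Then Q * Q = 1 and Matrix.fromBlocks A' B' B'ᵀ (2•1 − B'ᵀ * B') = Q * (Matrix.fromBlocks A B Bᵀ (2•1 − Bᵀ * B)) * Q, and likewise Matrix.fromBlocks A' B' B'ᵀ (B'ᵀ * B' − 2•1) = Q * (Matrix.fromBlocks A B Bᵀ (Bᵀ * B − 2•1)) * Q. In particular, switching equivalent signed graphs have switching equivalent combinatorial and spectral total graphs. -/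
open Matrix

/-- Switching a signed graph (replacing `A` by `S * A * S` and `B` by `S * B`)
yields switching similar combinatorial and spectral total matrices. -/
theorem total_graph_switching_equivalent
    (n m : ℕ) (A : Matrix (Fin n) (Fin n) ℝ) (hA : Aᵀ = A)
    (B : Matrix (Fin n) (Fin m) ℝ) (S : Matrix (Fin n) (Fin n) ℝ)
    (hSdiag : ∀ i j : Fin n, i ≠ j → S i j = 0)
    (hSpm : ∀ i : Fin n, S i i = 1 ∨ S i i = -1) :
    let A' := S * A * S
    let B' := S * B
    let Q : Matrix (Fin n ⊕ Fin m) (Fin n ⊕ Fin m) ℝ := Matrix.fromBlocks S 0 0 1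
    Q * Q = 1 ∧
    Matrix.fromBlocks A' B' B'ᵀ ((2 : ℝ) • 1 - B'ᵀ * B') =
      Q * Matrix.fromBlocks A B Bᵀ ((2 : ℝ) • 1 - Bᵀ * B) * Q ∧
    Matrix.fromBlocks A' B' B'ᵀ (B'ᵀ * B' - (2 : ℝ) • 1) =
      Q * Matrix.fromBlocks A B Bᵀ (Bᵀ * B - (2 : ℝ) • 1) * Q := by
  intro A' B' Q
  have hSsym : Sᵀ = S := by
    ext i j
    by_cases h : i = j
    · subst h; simp [Matrix.transpose_apply]
    · rw [Matrix.transpose_apply, hSdiag i j h, hSdiag j i (Ne.symm h)]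
  have hSS : S * S = 1 := by
    ext i j
    by_cases h : i = j
    · subst h
      rw [Matrix.mul_apply]
      rw [Finset.sum_eq_single i]
      · rcases hSpm i with h1 | h1 <;> simp [h1]
      · intro b _ hb; rw [hSdiag i b (Ne.symm hb), zero_mul]
      · simp
    · rw [Matrix.mul_apply]
      rw [Finset.sum_eq_zero]
      · simp [Matrix.one_apply, h]
      · intro b _
        by_cases hb : i = b
        · subst hb; rw [hSdiag i j h, mul_zero]
        · rw [hSdiag i b hb, zero_mul]
  have hB't : B'ᵀ = Bᵀ * S := by
    show (S * B)ᵀ = Bᵀ * S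
    rw [Matrix.transpose_mul, hSsym]
  have hBB : B'ᵀ * B' = Bᵀ * B := by
    rw [hB't]
    show (Bᵀ * S) * (S * B) = Bᵀ * B
    rw [Matrix.mul_assoc, ← Matrix.mul_assoc S, hSS, Matrix.one_mul]
  have hQQ : Q * Q = 1 := by
    show Matrix.fromBlocks S 0 0 1 * Matrix.fromBlocks S 0 0 1 = 1
    rw [Matrix.fromBlocks_multiply]
    simp [hSS, Matrix.fromBlocks_one]
  refine ⟨hQQ, ?_, ?_⟩ <;>
  · show Matrix.fromBlocks _ _ _ _ = Matrix.fromBlocks S 0 0 1 * _ * Matrix.fromBlocks S 0 0 1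
    rw [Matrix.fromBlocks_multiply, Matrix.fromBlocks_multiply]
    simp only [Matrix.zero_mul, Matrix.mul_zero, add_zero, zero_add, Matrix.one_mul,
      Matrix.mul_one]
    rw [hBB, hB't]
end

section
/- Let B : Matrix (Fin n) (Fin m) ℝ be an orientation matrix of a signed graph Σ (every column has exactly two nonzero entries, each ±1, in distinct rows; no two distinct columns have their nonzero entries in the same pair of rows) and let A := D − B * Bᵀ be its adjacency matrix, where D is the diagonal matrix with D i i = (B * Bᵀ) i i. Then the spectral line graph of Σ is balanced if and only if Σ is antibalanced; that is: there exists a diagonal matrix S : Matrix (Fin m) (Fin m) ℝ with all diagonal entries ±1 such that S * (Bᵀ * B − 2•1) * S has all entries nonnegative, if and only if there exists a diagonal matrix s : Matrix (Fin n) (Fin n) ℝ with all diagonal entries ±1 such that s * A * s has all entries nonpositive. -/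
open Matrix

/-!
Say that `B` is signed by sign vectors `s` on the vertices and `d` on the edges if
`B = diag(s) |B| diag(d)`. Then `diag(d) (Bᵀ B) diag(d) = |B|ᵀ |B|` and
`diag(s) (B Bᵀ) diag(s) = |B| |B|ᵀ` are entrywise nonnegative; as the line graph is `Bᵀ B - 2`
and `-A` agrees with `B Bᵀ` off the diagonal, such a factorisation makes the line graph balanced
and `Σ` antibalanced. Conversely, two edges `e ≠ f` meet in at most one vertex `i`, so
`(Bᵀ B) e f = B i e * B i f`; a switching `d` making `Bᵀ B` nonnegative off the diagonal therefore
gives all edges at `i` the same sign `d e * B i e`, and these signs form `s`. The absence of a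
`2 × 2` block of nonzero entries in `B` is symmetric under transposition, so the same argument
applied to `Bᵀ` turns an antibalancing `s` into a suitable `d`.
-/

theorem sign_mul_sign {x y : ℝ} (hx : x = 1 ∨ x = -1) (hy : y = 1 ∨ y = -1) :
    x * y = 1 ∨ x * y = -1 := by
  rcases hx with rfl | rfl <;> rcases hy with rfl | rfl <;> norm_num

theorem eq_of_sign_of_mul_nonneg {x y : ℝ} (hx : x = 1 ∨ x = -1) (hy : y = 1 ∨ y = -1)
    (h : 0 ≤ x * y) : x = y := by
  rcases hx with rfl | rfl <;> rcases hy with rfl | rfl <;> first | rfl | norm_num at h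

theorem exists_signMatrix_iff {ι : Type*} [Fintype ι] (M : Matrix ι ι ℝ) (P : ℝ → Prop) :
    (∃ S : Matrix ι ι ℝ, (∀ i j, i ≠ j → S i j = 0) ∧ (∀ i, S i i = 1 ∨ S i i = -1) ∧
      ∀ i j, P ((S * M * S) i j)) ↔
    ∃ s : ι → ℝ, (∀ i, s i = 1 ∨ s i = -1) ∧ ∀ i j, P (s i * M i j * s j) := by
  classical
  constructor
  · rintro ⟨S, hdiag, hS, hP⟩
    refine ⟨S.diag, hS, fun i j => ?_⟩
    have hPij := hP i j
    rwa [← IsDiag.diagonal_diag hdiag, mul_diagonal, diagonal_mul] at hPij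
  · rintro ⟨s, hs, hP⟩
    refine ⟨diagonal s, fun i j hij => diagonal_apply_ne _ hij, fun i => by simpa using hs i,
      fun i j => ?_⟩
    rw [mul_diagonal, diagonal_mul]
    exact hP i j

def HasTwoSignedEntries {ι : Type*} (v : ι → ℝ) : Prop :=
  ∃ i j, i ≠ j ∧ (v i = 1 ∨ v i = -1) ∧ (v j = 1 ∨ v j = -1) ∧ ∀ k, k ≠ i → k ≠ j → v k = 0

namespace HasTwoSignedEntries

variable {ι : Type*} {v : ι → ℝ}

theorem eq_one_or_neg_one (hv : HasTwoSignedEntries v) {i : ι} (hi : v i ≠ 0) :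
    v i = 1 ∨ v i = -1 := by
  obtain ⟨a, b, -, ha, hb, hzero⟩ := hv
  by_cases hia : i = a
  · exact hia ▸ ha
  by_cases hib : i = b
  · exact hib ▸ hb
  exact absurd (hzero i hia hib) hi

theorem eq_or_eq_of_ne_zero (hv : HasTwoSignedEntries v) {i j k : ι} (hij : i ≠ j)
    (hi : v i ≠ 0) (hj : v j ≠ 0) (hk : v k ≠ 0) : k = i ∨ k = j := by
  obtain ⟨a, b, -, -, -, hzero⟩ := hv
  have mem : ∀ x, v x ≠ 0 → x = a ∨ x = b := fun x hx => by
    by_contra! h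
    exact hx (hzero x h.1 h.2)
  rcases mem i hi with rfl | rfl <;> rcases mem j hj with rfl | rfl <;>
    rcases mem k hk with rfl | rfl <;> tauto

theorem sum_mul_self [Fintype ι] (hv : HasTwoSignedEntries v) : ∑ i, v i * v i = 2 := by
  classical
  obtain ⟨a, b, hab, ha, hb, hzero⟩ := hv
  rw [Finset.sum_eq_add_of_mem a b (Finset.mem_univ _) (Finset.mem_univ _) hab
    fun k _ hk => by rw [hzero k hk.1 hk.2, mul_zero]]
  rcases ha with ha | ha <;> rcases hb with hb | hb <;> rw [ha, hb] <;> norm_num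

end HasTwoSignedEntries

section Incidence

variable {ι κ : Type*} {B : Matrix ι κ ℝ}

def RectangleFree (B : Matrix ι κ ℝ) : Prop :=
  ∀ ⦃i j : ι⦄ ⦃e f : κ⦄, i ≠ j → e ≠ f → B i e ≠ 0 → B j e ≠ 0 → B i f ≠ 0 → B j f = 0

theorem RectangleFree.transpose (h : RectangleFree B) : RectangleFree Bᵀ :=
  fun _ _ _ _ hef hij he hf he' => h hij hef he he' hf

theorem rectangleFree_of_columns (hcol : ∀ e, HasTwoSignedEntries (B · e))
    (hsupp : ∀ e f, (∀ i, B i e ≠ 0 ↔ B i f ≠ 0) → e = f) : RectangleFree B := by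
  intro i j e f hij hef hie hje hif
  by_contra hjf
  refine hef (hsupp e f fun k => ⟨fun hk => ?_, fun hk => ?_⟩)
  · rcases (hcol e).eq_or_eq_of_ne_zero hij hie hje hk with rfl | rfl <;> assumption
  · rcases (hcol f).eq_or_eq_of_ne_zero hij hif hjf hk with rfl | rfl <;> assumption

theorem RectangleFree.transpose_mul_self_apply [Fintype ι] (h : RectangleFree B) {i : ι}
    {e f : κ} (hef : e ≠ f) (he : B i e ≠ 0) (hf : B i f ≠ 0) :
    (Bᵀ * B) e f = B i e * B i f := by
  rw [mul_apply]
  refine Finset.sum_eq_single i (fun j _ hji => ?_) (by simp)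
  by_cases hje : B j e = 0
  · simp [hje]
  · simp [h hji.symm hef he hje hf]

def IsSignedBy (B : Matrix ι κ ℝ) (s : ι → ℝ) (d : κ → ℝ) : Prop :=
  ∀ i e, B i e = s i * |B i e| * d e

variable {s : ι → ℝ} {d : κ → ℝ}

theorem IsSignedBy.transpose (h : IsSignedBy B s d) : IsSignedBy Bᵀ d s :=
  fun e i => (h i e).trans (by rw [transpose_apply]; ring)

theorem IsSignedBy.transpose_mul_self_nonneg [Fintype ι] (h : IsSignedBy B s d) (e f : κ) :
    0 ≤ d e * (Bᵀ * B) e f * d f := by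
  simp only [mul_apply, transpose_apply, Finset.mul_sum, Finset.sum_mul]
  refine Finset.sum_nonneg fun i _ => ?_
  rw [h i e, h i f]
  exact (by positivity : 0 ≤ (s i * d e * d f) ^ 2 * (|B i e| * |B i f|)).trans_eq (by ring)

theorem exists_isSignedBy_of_nonneg [Fintype ι]
    (hB : ∀ i e, B i e ≠ 0 → B i e = 1 ∨ B i e = -1) (hrect : RectangleFree B)
    (hd : ∀ e, d e = 1 ∨ d e = -1) (h : ∀ e f, e ≠ f → 0 ≤ d e * (Bᵀ * B) e f * d f) :
    ∃ s : ι → ℝ, (∀ i, s i = 1 ∨ s i = -1) ∧ IsSignedBy B s d := by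
  have hsign : ∀ i e, B i e ≠ 0 → d e * B i e = 1 ∨ d e * B i e = -1 :=
    fun i e he => sign_mul_sign (hd e) (hB i e he)
  have hvertex : ∀ i, ∃ σ : ℝ, (σ = 1 ∨ σ = -1) ∧ ∀ e, B i e ≠ 0 → d e * B i e = σ := by
    intro i
    by_cases hi : ∃ e, B i e ≠ 0
    · obtain ⟨e, he⟩ := hi
      refine ⟨d e * B i e, hsign i e he, fun f hf => ?_⟩
      rcases eq_or_ne f e with rfl | hfe
      · rfl
      refine eq_of_sign_of_mul_nonneg (hsign i f hf) (hsign i e he) ?_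
      have hfe_nonneg := h f e hfe
      rw [hrect.transpose_mul_self_apply hfe hf he] at hfe_nonneg
      exact hfe_nonneg.trans_eq (by ring)
    · exact ⟨1, Or.inl rfl, fun e he => absurd ⟨e, he⟩ hi⟩
  choose s hs hsB using hvertex
  refine ⟨s, hs, fun i e => ?_⟩
  by_cases he : B i e = 0
  · simp [he]
  rw [← hsB i e he]
  rcases hd e with hde | hde <;> rcases hB i e he with hie | hie <;> rw [hde, hie] <;> norm_num

end Incidence

def OffDiagBalanced {ι : Type*} (M : Matrix ι ι ℝ) : Prop :=
  ∃ s : ι → ℝ, (∀ i, s i = 1 ∨ s i = -1) ∧ ∀ i j, i ≠ j → 0 ≤ s i * M i j * s j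

theorem offDiagBalanced_transpose_mul_self_iff {ι κ : Type*} [Fintype ι] [Fintype κ]
    {B : Matrix ι κ ℝ} (hB : ∀ i e, B i e ≠ 0 → B i e = 1 ∨ B i e = -1)
    (hrect : RectangleFree B) : OffDiagBalanced (Bᵀ * B) ↔ OffDiagBalanced (B * Bᵀ) := by
  constructor
  · rintro ⟨d, hd, hBd⟩
    obtain ⟨s, hs, hsigned⟩ := exists_isSignedBy_of_nonneg hB hrect hd hBd
    refine ⟨s, hs, fun i j _ => ?_⟩
    simpa only [transpose_transpose] using hsigned.transpose.transpose_mul_self_nonneg i j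
  · rintro ⟨s, hs, hBs⟩
    obtain ⟨d, hd, hsigned⟩ := exists_isSignedBy_of_nonneg (B := Bᵀ) (fun e i => hB i e)
      hrect.transpose hs (by rwa [transpose_transpose])
    exact ⟨d, hd, fun e f _ => hsigned.transpose.transpose_mul_self_nonneg e f⟩

/-- The spectral line graph of a signed graph `Σ` is balanced if and only if
`Σ` is antibalanced. -/
theorem spectral_line_graph_balanced_iff_antibalanced
    (n m : ℕ) (B : Matrix (Fin n) (Fin m) ℝ)
    (hcol : ∀ e : Fin m, ∃ i j : Fin n, i ≠ j ∧
      (B i e = 1 ∨ B i e = -1) ∧ (B j e = 1 ∨ B j e = -1) ∧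
      ∀ k : Fin n, k ≠ i → k ≠ j → B k e = 0)
    (hsupp : ∀ e f : Fin m, (∀ i : Fin n, B i e ≠ 0 ↔ B i f ≠ 0) → e = f) :
    let D : Matrix (Fin n) (Fin n) ℝ := Matrix.diagonal fun i => (B * Bᵀ) i i
    let A : Matrix (Fin n) (Fin n) ℝ := D - B * Bᵀ
    let LB : Matrix (Fin m) (Fin m) ℝ := Bᵀ * B - (2 : ℝ) • 1
    (∃ S : Matrix (Fin m) (Fin m) ℝ,
      (∀ i j : Fin m, i ≠ j → S i j = 0) ∧
      (∀ i : Fin m, S i i = 1 ∨ S i i = -1) ∧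
      ∀ i j : Fin m, 0 ≤ (S * LB * S) i j) ↔
    (∃ s : Matrix (Fin n) (Fin n) ℝ,
      (∀ i j : Fin n, i ≠ j → s i j = 0) ∧
      (∀ i : Fin n, s i i = 1 ∨ s i i = -1) ∧
      ∀ i j : Fin n, (s * A * s) i j ≤ 0) := by
  intro D A LB
  have hcolumns : ∀ e, HasTwoSignedEntries (B · e) := hcol
  have hLB (d : Fin m → ℝ) : (∀ e f, 0 ≤ d e * LB e f * d f) ↔
      ∀ e f, e ≠ f → 0 ≤ d e * (Bᵀ * B) e f * d f := by
    refine forall₂_congr fun e f => ?_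
    rcases eq_or_ne e f with rfl | hef
    · simp [LB, mul_apply, (hcolumns e).sum_mul_self]
    · simp [LB, hef]
  have hA (s : Fin n → ℝ) : (∀ i j, s i * A i j * s j ≤ 0) ↔
      ∀ i j, i ≠ j → 0 ≤ s i * (B * Bᵀ) i j * s j := by
    refine forall₂_congr fun i j => ?_
    rcases eq_or_ne i j with rfl | hij
    · simp [A, D]
    · simp [A, D, hij]
  calc _ ↔ OffDiagBalanced (Bᵀ * B) := (exists_signMatrix_iff LB (0 ≤ ·)).trans
        (exists_congr fun d => and_congr_right fun _ => hLB d)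
    _ ↔ OffDiagBalanced (B * Bᵀ) := offDiagBalanced_transpose_mul_self_iff
        (fun i e => (hcolumns e).eq_one_or_neg_one) (rectangleFree_of_columns hcolumns hsupp)
    _ ↔ _ := ((exists_signMatrix_iff A (· ≤ 0)).trans
        (exists_congr fun s => and_congr_right fun _ => hA s)).symm
end

section
/- Let G be a finite simple graph with n vertices and m edges, encoded by its 0/1 incidence matrix N : Matrix (Fin n) (Fin m) ℝ, with adjacency matrix A (A i j = (N * Nᵀ) i j for i ≠ j, A i i = 0) and degrees d i := (N * Nᵀ) i i. Let T := Matrix.fromBlocks A N Nᵀ (Nᵀ * N − 2•1) be the adjacency matrix of the total graph 𝒯(G). Then Matrix.trace (T * T * T) = 2 * Matrix.trace (A * A * A) + 6 * m + 6 * ∑ i, (Nat.choose (d i + 1) 3); equivalently, since the number of triangles of a graph with adjacency matrix M equals trace(M³)/6, the total graph 𝒯(G) has exactly 2t + m + ∑_{i=1}^{n} C(d_i + 1, 3) triangles, where t = trace(A³)/6 is the number of triangles of G. -/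
open Matrix

lemma two_mul_choose_two (k : ℕ) : 2 * Nat.choose (k + 1) 2 = k * (k + 1) := by
  induction k with
  | zero => rfl
  | succ k ih =>
    rw [Nat.choose_succ_succ (k+1) 1, Nat.mul_add, ih, Nat.choose_one_right]
    ring

lemma six_mul_choose_three (k : ℕ) : 6 * Nat.choose (k + 1) 3 + k = k ^ 3 := by
  induction k with
  | zero => rfl
  | succ k ih =>
    rw [Nat.choose_succ_succ (k+1) 2, Nat.mul_add]
    have h2 : 6 * Nat.choose (k+1) 2 = 3 * (k * (k+1)) := by
      rw [show (6:ℕ) = 3 * 2 by rfl, Nat.mul_assoc, two_mul_choose_two]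
    nlinarith [ih, h2]

lemma trace_fromBlocks' {n m : ℕ} (A : Matrix (Fin n) (Fin n) ℝ)
    (B : Matrix (Fin n) (Fin m) ℝ) (C : Matrix (Fin m) (Fin n) ℝ)
    (D : Matrix (Fin m) (Fin m) ℝ) :
    Matrix.trace (Matrix.fromBlocks A B C D) = Matrix.trace A + Matrix.trace D := by
  simp [Matrix.trace, Matrix.diag, Fintype.sum_sum_type, Matrix.fromBlocks]

/-- Triangle count of the total graph of an unsigned graph:
`trace(T³) = 2 trace(A³) + 6 m + 6 ∑ᵢ C(dᵢ+1, 3)`, i.e. the total graph has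
`2t + m + ∑ᵢ C(dᵢ+1, 3)` triangles. -/
theorem total_graph_triangle_count
    (n m : ℕ) (N : Matrix (Fin n) (Fin m) ℝ)
    (hcol : ∀ e : Fin m, ∃ i j : Fin n, i ≠ j ∧ N i e = 1 ∧ N j e = 1 ∧
      ∀ k : Fin n, k ≠ i → k ≠ j → N k e = 0)
    (hsupp : ∀ e f : Fin m, (∀ i : Fin n, N i e ≠ 0 ↔ N i f ≠ 0) → e = f)
    (A : Matrix (Fin n) (Fin n) ℝ)
    (hAoff : ∀ i j : Fin n, i ≠ j → A i j = (N * Nᵀ) i j)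
    (hAdiag : ∀ i : Fin n, A i i = 0)
    (d : Fin n → ℕ) (hd : ∀ i : Fin n, (N * Nᵀ) i i = (d i : ℝ)) :
    let T : Matrix (Fin n ⊕ Fin m) (Fin n ⊕ Fin m) ℝ :=
      Matrix.fromBlocks A N Nᵀ (Nᵀ * N - (2 : ℝ) • 1)
    Matrix.trace (T * T * T) =
      2 * Matrix.trace (A * A * A) + 6 * (m : ℝ) +
        6 * ∑ i : Fin n, ((Nat.choose (d i + 1) 3 : ℕ) : ℝ) := by
  intro T
  -- 0/1 entries
  have h01 : ∀ i e, N i e = 0 ∨ N i e = 1 := by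
    intro i e
    obtain ⟨a, b, hab, ha, hb, hz⟩ := hcol e
    by_cases hia : i = a
    · right; rw [hia]; exact ha
    · by_cases hib : i = b
      · right; rw [hib]; exact hb
      · left; exact hz i hia hib
  have one_of : ∀ i e, N i e ≠ 0 → N i e = 1 := fun i e h => (h01 i e).resolve_left h
  have hsq : ∀ i e, N i e * N i e = N i e := by
    intro i e; rcases h01 i e with h | h <;> rw [h] <;> ring
  -- column sums are 2
  have hcolsum : ∀ e, ∑ i, N i e = 2 := by
    intro e
    obtain ⟨a, b, hab, ha, hb, hz⟩ := hcol e
    have key : ∀ i, N i e = (if i = a then (1:ℝ) else 0) + (if i = b then 1 else 0) := by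
      intro i
      by_cases hia : i = a
      · subst hia; rw [if_pos rfl, if_neg hab, ha]; ring
      · by_cases hib : i = b
        · subst hib; rw [if_neg hia, if_pos rfl, hb]; ring
        · rw [if_neg hia, if_neg hib, hz i hia hib]; ring
    rw [Finset.sum_congr rfl (fun i _ => key i), Finset.sum_add_distrib,
      Finset.sum_ite_eq' Finset.univ a (fun _ => (1:ℝ)),
      Finset.sum_ite_eq' Finset.univ b (fun _ => (1:ℝ))]
    simp; norm_num
  -- row sums of N are the degrees
  have hdN : ∀ i, ∑ e, N i e = (d i : ℝ) := by
    intro i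
    rw [← hd i, Matrix.mul_apply]
    exact Finset.sum_congr rfl fun e _ => by
      rw [Matrix.transpose_apply, hsq]
  -- support characterization
  have hsupport : ∀ (e : Fin m) (a b : Fin n), a ≠ b → N a e = 1 → N b e = 1 →
      ∀ k, N k e ≠ 0 ↔ (k = a ∨ k = b) := by
    intro e a b hab ha hb
    obtain ⟨x, y, hxy, hx, hy, hz⟩ := hcol e
    have mem : ∀ c : Fin n, N c e = 1 → c = x ∨ c = y := by
      intro c hc
      by_contra h
      push_neg at h
      rw [hz c h.1 h.2] at hc; norm_num at hc
    have key : ∀ k, N k e ≠ 0 ↔ (k = x ∨ k = y) := by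
      intro k
      constructor
      · intro hk
        by_contra h
        push_neg at h
        exact hk (hz k h.1 h.2)
      · rintro (rfl | rfl) <;> simp [hx, hy]
    rcases mem a ha with rfl | rfl
    · rcases mem b hb with rfl | rfl
      · exact absurd rfl hab
      · exact key
    · rcases mem b hb with rfl | rfl
      · intro k; rw [key k]; tauto
      · exact absurd rfl hab
  -- adjacency entries are idempotent (0/1)
  have hA01 : ∀ i j, A i j * A i j = A i j := by
    intro i j
    by_cases hij : i = j
    · subst hij; rw [hAdiag]; ring
    · rw [hAoff i j hij, Matrix.mul_apply]
      simp only [Matrix.transpose_apply]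
      by_cases hall : ∀ e, N i e * N j e = 0
      · rw [Finset.sum_eq_zero fun e _ => hall e]; ring
      · push_neg at hall
        obtain ⟨e₀, he₀⟩ := hall
        have hie : N i e₀ = 1 := one_of _ _ (left_ne_zero_of_mul he₀)
        have hje : N j e₀ = 1 := one_of _ _ (right_ne_zero_of_mul he₀)
        have honly : ∀ f ∈ Finset.univ, f ≠ e₀ → N i f * N j f = 0 := by
          intro f _ hf
          by_contra hc
          apply hf
          apply hsupp f e₀
          intro k
          rw [hsupport f i j hij (one_of _ _ (left_ne_zero_of_mul hc))
              (one_of _ _ (right_ne_zero_of_mul hc)) k,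
            hsupport e₀ i j hij hie hje k]
        rw [Finset.sum_eq_single e₀ honly (fun h => absurd (Finset.mem_univ e₀) h),
          hie, hje]
        ring
  -- symmetry of A
  have hAsym : ∀ i j, A j i = A i j := by
    intro i j
    by_cases hij : i = j
    · subst hij; rfl
    · rw [hAoff j i (Ne.symm hij), hAoff i j hij, Matrix.mul_apply, Matrix.mul_apply]
      exact Finset.sum_congr rfl fun e _ => by
        simp only [Matrix.transpose_apply]; ring
  -- row sums of A are the degrees
  have hArow : ∀ i, ∑ j, A i j = (d i : ℝ) := by
    intro i
    have h1 : ∀ j, A i j = (N*Nᵀ) i j - (if j = i then (d i:ℝ) else 0) := by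
      intro j
      by_cases hj : j = i
      · subst hj; rw [if_pos rfl, hd, hAdiag]; ring
      · rw [if_neg hj, hAoff i j (fun h => hj h.symm), sub_zero]
    rw [Finset.sum_congr rfl fun j _ => h1 j, Finset.sum_sub_distrib,
      Finset.sum_ite_eq' Finset.univ i (fun _ => (d i : ℝ)), if_pos (Finset.mem_univ i)]
    have h2 : ∑ j, (N*Nᵀ) i j = 2 * (d i : ℝ) := by
      simp only [Matrix.mul_apply, Matrix.transpose_apply]
      rw [Finset.sum_comm]
      calc ∑ e, ∑ j, N i e * N j e = ∑ e, N i e * 2 := by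
            refine Finset.sum_congr rfl fun e _ => ?_
            rw [← Finset.mul_sum, hcolsum]
        _ = 2 * (d i : ℝ) := by
            rw [← hdN i, Finset.mul_sum]
            exact Finset.sum_congr rfl fun e _ => by ring
    rw [h2]; ring
  -- decompose N * Nᵀ
  set D : Matrix (Fin n) (Fin n) ℝ := Matrix.diagonal (fun i => (d i : ℝ)) with hDdef
  have hP : N * Nᵀ = A + D := by
    ext i j
    by_cases hij : i = j
    · subst hij
      rw [Matrix.add_apply, hAdiag, hDdef, Matrix.diagonal_apply_eq, hd, zero_add]
    · rw [Matrix.add_apply, hAoff i j hij, hDdef, Matrix.diagonal_apply_ne _ hij, add_zero]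
  -- trace helpers
  have tA : trace A = 0 := by
    simp only [Matrix.trace, Matrix.diag]
    exact Finset.sum_eq_zero fun i _ => hAdiag i
  have hAAdiag : ∀ i, (A * A) i i = (d i : ℝ) := by
    intro i
    rw [Matrix.mul_apply]
    calc ∑ j, A i j * A j i = ∑ j, A i j :=
          Finset.sum_congr rfl fun j _ => by rw [hAsym j i, hA01]
      _ = (d i : ℝ) := hArow i
  have tAA : trace (A*A) = ∑ i, (d i : ℝ) := by
    simp only [Matrix.trace, Matrix.diag]
    exact Finset.sum_congr rfl fun i _ => hAAdiag i
  have tAAD : trace (A*A*D) = ∑ i, (d i : ℝ)^2 := by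
    simp only [Matrix.trace, Matrix.diag, hDdef, Matrix.mul_diagonal]
    exact Finset.sum_congr rfl fun i _ => by rw [hAAdiag]; ring
  have tAD : trace (A*D) = 0 := by
    simp only [Matrix.trace, Matrix.diag, hDdef, Matrix.mul_diagonal]
    exact Finset.sum_eq_zero fun i _ => by rw [hAdiag]; ring
  have tADD : trace (A*D*D) = 0 := by
    simp only [Matrix.trace, Matrix.diag, hDdef, Matrix.mul_diagonal]
    exact Finset.sum_eq_zero fun i _ => by rw [hAdiag]; ring
  have tDAD : trace (D*A*D) = 0 := by
    simp only [Matrix.trace, Matrix.diag, hDdef, Matrix.mul_diagonal, Matrix.diagonal_mul]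
    exact Finset.sum_eq_zero fun i _ => by rw [hAdiag]; ring
  have tD : trace D = ∑ i, (d i : ℝ) := by
    rw [hDdef, Matrix.trace_diagonal]
  have tDD : trace (D*D) = ∑ i, (d i : ℝ)^2 := by
    rw [hDdef, Matrix.diagonal_mul_diagonal, Matrix.trace_diagonal]
    exact Finset.sum_congr rfl fun i _ => by ring
  have tDDD : trace (D*D*D) = ∑ i, (d i : ℝ)^3 := by
    rw [hDdef, Matrix.diagonal_mul_diagonal, Matrix.diagonal_mul_diagonal,
      Matrix.trace_diagonal]
    exact Finset.sum_congr rfl fun i _ => by ring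
  have hS1 : ∑ i, (d i : ℝ) = 2 * m := by
    calc ∑ i, (d i : ℝ) = ∑ i, ∑ e, N i e :=
          Finset.sum_congr rfl fun i _ => (hdN i).symm
      _ = ∑ e, ∑ i : Fin n, N i e := Finset.sum_comm
      _ = ∑ _e : Fin m, (2:ℝ) := Finset.sum_congr rfl fun e _ => hcolsum e
      _ = 2 * m := by simp [Finset.sum_const]; ring
  -- traces of powers of N * Nᵀ
  have tP : trace (N * Nᵀ) = ∑ i, (d i : ℝ) := by
    rw [hP, trace_add, tA, tD, zero_add]
  have tP2 : trace (N*Nᵀ*(N*Nᵀ)) = (∑ i, (d i : ℝ)) + ∑ i, (d i : ℝ)^2 := by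
    rw [hP]
    simp only [add_mul, mul_add, trace_add]
    rw [trace_mul_comm D A, tAA, tAD, tDD]
    ring
  have tP3 : trace (N*Nᵀ*(N*Nᵀ)*(N*Nᵀ)) =
      trace (A*A*A) + 3 * ∑ i, (d i : ℝ)^2 + ∑ i, (d i : ℝ)^3 := by
    rw [hP]
    simp only [add_mul, mul_add, trace_add]
    rw [trace_mul_cycle A D A, trace_mul_cycle D A A, trace_mul_cycle A D A,
      trace_mul_cycle D D A, tAAD, tADD, tDAD, tDDD]
    ring
  -- traces of powers of Nᵀ * N
  have tC : trace (Nᵀ * N) = ∑ i, (d i : ℝ) := by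
    rw [trace_mul_comm]; exact tP
  have tC2 : trace (Nᵀ*N*(Nᵀ*N)) = (∑ i, (d i : ℝ)) + ∑ i, (d i : ℝ)^2 := by
    rw [Matrix.mul_assoc, trace_mul_comm,
      show N*(Nᵀ*N)*Nᵀ = N*Nᵀ*(N*Nᵀ) by simp only [Matrix.mul_assoc]]
    exact tP2
  have tC3 : trace (Nᵀ*N*(Nᵀ*N)*(Nᵀ*N)) =
      trace (A*A*A) + 3 * ∑ i, (d i : ℝ)^2 + ∑ i, (d i : ℝ)^3 := by
    rw [show Nᵀ*N*(Nᵀ*N)*(Nᵀ*N) = Nᵀ*(N*(Nᵀ*N)*(Nᵀ*N)) by simp only [Matrix.mul_assoc],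
      trace_mul_comm,
      show N*(Nᵀ*N)*(Nᵀ*N)*Nᵀ = N*Nᵀ*(N*Nᵀ)*(N*Nᵀ) by simp only [Matrix.mul_assoc]]
    exact tP3
  -- the choose sum
  have hchoose : 6 * ∑ i : Fin n, ((Nat.choose (d i + 1) 3 : ℕ) : ℝ) =
      (∑ i, (d i : ℝ)^3) - ∑ i, (d i : ℝ) := by
    rw [Finset.mul_sum, ← Finset.sum_sub_distrib]
    refine Finset.sum_congr rfl fun i _ => ?_
    have h := six_mul_choose_three (d i)
    have h' : (6:ℝ) * (Nat.choose (d i + 1) 3 : ℕ) + (d i : ℝ) = (d i : ℝ)^3 := by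
      exact_mod_cast congrArg (Nat.cast : ℕ → ℝ) h
    linarith
  -- expand the block matrix trace
  show trace
      (Matrix.fromBlocks A N Nᵀ (Nᵀ * N - (2 : ℝ) • 1) *
        Matrix.fromBlocks A N Nᵀ (Nᵀ * N - (2 : ℝ) • 1) *
        Matrix.fromBlocks A N Nᵀ (Nᵀ * N - (2 : ℝ) • 1)) = _
  set W : Matrix (Fin m) (Fin m) ℝ := Nᵀ * N - (2 : ℝ) • 1 with hWdef
  rw [Matrix.fromBlocks_multiply, Matrix.fromBlocks_multiply, trace_fromBlocks']
  simp only [Matrix.add_mul, Matrix.mul_add, trace_add]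
  -- evaluate each trace term
  have e2 : trace (N*Nᵀ*A) = trace (A*(N*Nᵀ)) := trace_mul_comm _ _
  have e3 : trace (A*N*Nᵀ) = trace (A*(N*Nᵀ)) := by rw [Matrix.mul_assoc]
  have e4 : trace (N*W*Nᵀ) = trace (Nᵀ*N*W) := by
    rw [trace_mul_comm (N*W) Nᵀ, ← Matrix.mul_assoc]
  have e5 : trace (Nᵀ*A*N) = trace (A*(N*Nᵀ)) := by
    rw [trace_mul_cycle Nᵀ A N, ← trace_mul_comm]
  have e6 : trace (W*Nᵀ*N) = trace (Nᵀ*N*W) := by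
    rw [trace_mul_cycle W Nᵀ N]; exact e4
  have vAP : trace (A*(N*Nᵀ)) = ∑ i, (d i : ℝ) := by
    rw [hP, mul_add, trace_add, tAA, tAD, add_zero]
  have vCW : trace (Nᵀ*N*W) = trace (Nᵀ*N*(Nᵀ*N)) - 2 * trace (Nᵀ*N) := by
    rw [hWdef, mul_sub, Matrix.mul_smul, mul_one, trace_sub, trace_smul, smul_eq_mul]
  have vW3 : trace (W*W*W) = trace (Nᵀ*N*(Nᵀ*N)*(Nᵀ*N)) - 6 * trace (Nᵀ*N*(Nᵀ*N))
      + 12 * trace (Nᵀ*N) - 8 * m := by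
    rw [hWdef]
    simp only [sub_mul, mul_sub, Matrix.smul_mul, Matrix.mul_smul, one_mul, mul_one,
      trace_sub, trace_smul, smul_smul, smul_eq_mul, trace_one, Fintype.card_fin]
    ring
  rw [e2, e3, e4, e5, e6, vAP, vCW, vW3, tC, tC2, tC3, hchoose]
  rw [hS1]
  ring
end

section
/- Let B : Matrix (Fin n) (Fin m) ℝ be an orientation matrix of a signed graph Σ (every column has exactly two nonzero entries, each ±1, in distinct rows; no two distinct columns have their nonzero entries in the same pair of rows), with adjacency matrix A := D − B * Bᵀ (D the diagonal of B * Bᵀ) and degrees d i := D i i. Let T_C := Matrix.fromBlocks A B Bᵀ (2•1 − Bᵀ * B) be the adjacency matrix of the combinatorial total graph of Σ. Then Matrix.trace (T_C * T_C * T_C) = 2 * Matrix.trace (A * A * A) − 6 * m − 6 * ∑ i, (Nat.choose (d i + 1) 3). Equivalently (since trace(M³)/6 counts positive triangles minus negative triangles and the total number of triangles of T_C is 2t + m + ∑ C(d_i+1,3)), the combinatorial total graph T_C(Σ) has exactly 2t⁺ positive triangles, where t⁺ is the number of positive triangles of Σ. -/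
open Matrix Finset

lemma trace_diag_mul {n : ℕ} (v : Fin n → ℝ) (M : Matrix (Fin n) (Fin n) ℝ) :
    trace (Matrix.diagonal v * M) = ∑ i, v i * M i i := by
  simp [Matrix.trace, Matrix.diag, Matrix.diagonal_mul]

section
variable {n m : ℕ} (B : Matrix (Fin n) (Fin m) ℝ)
variable (hcol : ∀ e : Fin m, ∃ i j : Fin n, i ≠ j ∧
      (B i e = 1 ∨ B i e = -1) ∧ (B j e = 1 ∨ B j e = -1) ∧
      ∀ k : Fin n, k ≠ i → k ≠ j → B k e = 0)

include hcol in
lemma entry_cases (i : Fin n) (e : Fin m) : B i e = 0 ∨ B i e = 1 ∨ B i e = -1 := by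
  obtain ⟨a, b, hab, ha, hb, h0⟩ := hcol e
  by_cases h1 : i = a
  · subst h1; tauto
  by_cases h2 : i = b
  · subst h2; tauto
  · exact Or.inl (h0 i h1 h2)

include hcol in
lemma col_sum_sq (e : Fin m) : ∑ i, (B i e)^2 = 2 := by
  obtain ⟨a, b, hab, ha, hb, h0⟩ := hcol e
  have hz : ∀ i ∈ (univ : Finset (Fin n)), i ∉ ({a, b} : Finset (Fin n)) → (B i e)^2 = 0 := by
    intro i _ hi
    simp only [Finset.mem_insert, Finset.mem_singleton, not_or] at hi
    rw [h0 i hi.1 hi.2]; ring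
  rw [← Finset.sum_subset (Finset.subset_univ {a, b}) hz, Finset.sum_pair hab]
  rcases ha with h | h <;> rcases hb with h' | h' <;> rw [h, h'] <;> norm_num

include hcol in
lemma col_support (e : Fin m) {i j : Fin n} (hij : i ≠ j)
    (hi : B i e ≠ 0) (hj : B j e ≠ 0) (k : Fin n) :
    B k e ≠ 0 ↔ k = i ∨ k = j := by
  obtain ⟨a, b, hab, ha, hb, h0⟩ := hcol e
  have hmem : ∀ x : Fin n, B x e ≠ 0 → x = a ∨ x = b := by
    intro x hx
    by_contra hc; push_neg at hc
    exact hx (h0 x hc.1 hc.2)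
  have hia := hmem i hi
  have hja := hmem j hj
  constructor
  · intro hk
    rcases hmem k hk with rfl | rfl
    · rcases hia with h1 | h1
      · exact Or.inl h1.symm
      · rcases hja with h2 | h2
        · exact Or.inr h2.symm
        · exact absurd (h1.trans h2.symm) hij
    · rcases hja with h2 | h2
      · rcases hia with h1 | h1
        · exact absurd (h1.trans h2.symm) hij
        · exact Or.inl h1.symm
      · exact Or.inr h2.symm
  · rintro (rfl | rfl) <;> assumption

end

lemma sq_sum_unique {ι : Type*} [Fintype ι] (g : ι → ℝ)
    (h : ∀ e f, g e ≠ 0 → g f ≠ 0 → e = f) :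
    (∑ e, g e) ^ 2 = ∑ e, (g e) ^ 2 := by
  by_cases hz : ∀ e, g e = 0
  · simp [hz]
  · push_neg at hz
    obtain ⟨e₀, he₀⟩ := hz
    have hb0 : ∀ b, b ≠ e₀ → g b = 0 := by
      intro b hb; by_contra hgb; exact hb (h b e₀ hgb he₀)
    rw [Finset.sum_eq_single e₀ (fun b _ hb => hb0 b hb) (by simp),
        Finset.sum_eq_single e₀ (fun b _ hb => by rw [hb0 b hb]; ring) (by simp)]

-- the key diagonal lemma: (A*A) i i = d i
lemma AA_diag {n m : ℕ} (B : Matrix (Fin n) (Fin m) ℝ)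
    (hcol : ∀ e : Fin m, ∃ i j : Fin n, i ≠ j ∧
      (B i e = 1 ∨ B i e = -1) ∧ (B j e = 1 ∨ B j e = -1) ∧
      ∀ k : Fin n, k ≠ i → k ≠ j → B k e = 0)
    (hsupp : ∀ e f : Fin m, (∀ i : Fin n, B i e ≠ 0 ↔ B i f ≠ 0) → e = f)
    (i : Fin n) :
    ((Matrix.diagonal (fun i => (B * Bᵀ) i i) - B * Bᵀ) *
     (Matrix.diagonal (fun i => (B * Bᵀ) i i) - B * Bᵀ)) i i = (B * Bᵀ) i i := by
  set A : Matrix (Fin n) (Fin n) ℝ := Matrix.diagonal (fun i => (B * Bᵀ) i i) - B * Bᵀ with hA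
  have hA0 : A i i = 0 := by simp [hA, Matrix.sub_apply, Matrix.diagonal_apply_eq]
  have hAij : ∀ j k : Fin n, j ≠ k → A j k = -(∑ e, B j e * B k e) := by
    intro j k hjk
    simp [hA, Matrix.sub_apply, Matrix.diagonal_apply_ne _ hjk, Matrix.mul_apply,
      Matrix.transpose_apply]
  have hsq : ∀ (a : Fin n) (e : Fin m), (B a e)^2 * (B a e)^2 = (B a e)^2 := by
    intro a e
    rcases entry_cases B hcol a e with h | h | h <;> rw [h] <;> norm_num
  have key : ∀ j, j ≠ i → A i j * A j i = ∑ e, (B i e)^2 * (B j e)^2 := by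
    intro j hj
    have huniq : ∀ e f, B i e * B j e ≠ 0 → B i f * B j f ≠ 0 → e = f := by
      intro e f he hf
      rw [mul_ne_zero_iff] at he hf
      exact hsupp e f fun k =>
        (col_support B hcol e (Ne.symm hj) he.1 he.2 k).trans
          (col_support B hcol f (Ne.symm hj) hf.1 hf.2 k).symm
    rw [hAij i j (Ne.symm hj), hAij j i hj, neg_mul_neg,
      show (∑ e, B i e * B j e) * (∑ e, B j e * B i e) = (∑ e, B i e * B j e)^2 by
        rw [sq]; congr 1; exact Finset.sum_congr rfl fun e _ => mul_comm _ _,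
      sq_sum_unique _ huniq]
    exact Finset.sum_congr rfl fun e _ => by ring
  -- now sum
  rw [Matrix.mul_apply]
  have step1 : ∑ j, A i j * A j i
      = ∑ j, ((∑ e, (B i e)^2 * (B j e)^2) - if j = i then (∑ e, (B i e)^2 * (B i e)^2) else 0) := by
    refine Finset.sum_congr rfl fun j _ => ?_
    by_cases hji : j = i
    · subst hji; simp [hA0]
    · rw [key j hji, if_neg hji, sub_zero]
  rw [step1, Finset.sum_sub_distrib, Finset.sum_ite_eq' univ i
      (fun _ => (∑ e, (B i e)^2 * (B i e)^2)), if_pos (Finset.mem_univ i)]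
  rw [Finset.sum_comm]
  have h2 : ∀ e, ∑ j, (B i e)^2 * (B j e)^2 = (B i e)^2 * 2 := by
    intro e; rw [← Finset.mul_sum, col_sum_sq B hcol e]
  have h3 : ∑ e, (B i e)^2 * (B i e)^2 = ∑ e, (B i e)^2 :=
    Finset.sum_congr rfl fun e _ => hsq i e
  rw [Finset.sum_congr rfl fun e _ => h2 e, h3, Matrix.mul_apply]
  have : ∑ e, B i e * Bᵀ e i = ∑ e, (B i e)^2 :=
    Finset.sum_congr rfl fun e _ => by rw [Matrix.transpose_apply]; ring
  rw [this, ← Finset.sum_mul]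
  ring

lemma trace_mul_diag {n : ℕ} (v : Fin n → ℝ) (M : Matrix (Fin n) (Fin n) ℝ) :
    trace (M * Matrix.diagonal v) = ∑ i, M i i * v i := by
  simp [Matrix.trace, Matrix.diag, Matrix.mul_diagonal]

lemma trace_fromBlocks'_s5 {α β : Type*} [Fintype α] [Fintype β]
    (A : Matrix α α ℝ) (B : Matrix α β ℝ) (C : Matrix β α ℝ) (D : Matrix β β ℝ) :
    trace (fromBlocks A B C D) = trace A + trace D := by
  simp [Matrix.trace, Matrix.diag, Fintype.sum_sum_type, fromBlocks_apply₁₁, fromBlocks_apply₂₂]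

lemma trace_mul_smul_one_sub {m : ℕ} (X L : Matrix (Fin m) (Fin m) ℝ) :
    trace (X * ((2:ℝ)•1 - L)) = 2 * trace X - trace (X * L) := by
  simp [mul_sub, mul_smul_comm, mul_one, smul_eq_mul]

lemma choose_two_real (k : ℕ) : ((k.choose 2 : ℕ) : ℝ) * 2 = (k:ℝ)^2 - k := by
  induction k with
  | zero => simp
  | succ j ih =>
    rw [show j+1 = j.succ from rfl, Nat.choose_succ_succ]
    rw [Nat.choose_one_right] at *
    push_cast at ih ⊢
    nlinarith [ih]

lemma choose_three_real (k : ℕ) : ((Nat.choose (k+1) 3 : ℕ) : ℝ) * 6 = (k:ℝ)^3 - k := by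
  induction k with
  | zero => norm_num [Nat.choose]
  | succ j ih =>
    rw [show j+1+1 = (j+1).succ from rfl, Nat.choose_succ_succ]
    have h2 := choose_two_real (j+1)
    push_cast at h2 ih ⊢
    nlinarith [ih, h2]

lemma main_aux {n m : ℕ} {B : Matrix (Fin n) (Fin m) ℝ}
    (hcol : ∀ e : Fin m, ∃ i j : Fin n, i ≠ j ∧
      (B i e = 1 ∨ B i e = -1) ∧ (B j e = 1 ∨ B j e = -1) ∧
      ∀ k : Fin n, k ≠ i → k ≠ j → B k e = 0)
    (hsupp : ∀ e f : Fin m, (∀ i : Fin n, B i e ≠ 0 ↔ B i f ≠ 0) → e = f)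
    {d : Fin n → ℕ} (hd : ∀ i : Fin n, (B * Bᵀ) i i = (d i : ℝ))
    {Dg A : Matrix (Fin n) (Fin n) ℝ}
    (hDg : Dg = Matrix.diagonal fun i => (B * Bᵀ) i i) (hA : A = Dg - B * Bᵀ) :
    Matrix.trace
        (Matrix.fromBlocks A B Bᵀ ((2 : ℝ) • 1 - Bᵀ * B) *
          Matrix.fromBlocks A B Bᵀ ((2 : ℝ) • 1 - Bᵀ * B) *
          Matrix.fromBlocks A B Bᵀ ((2 : ℝ) • 1 - Bᵀ * B)) =
      2 * Matrix.trace (A * A * A) - 6 * (m : ℝ) -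
        6 * ∑ i : Fin n, ((Nat.choose (d i + 1) 3 : ℕ) : ℝ) := by
  -- basic diagonal facts
  have hDg' : Dg = Matrix.diagonal (fun i => (d i : ℝ)) := by
    rw [hDg, show (fun i => (B * Bᵀ) i i) = (fun i => (d i : ℝ)) from funext hd]
  have hA0 : ∀ i, A i i = 0 := by
    intro i; rw [hA, hDg]; simp [Matrix.sub_apply, Matrix.diagonal_apply_eq]
  have hAAd : ∀ i, (A * A) i i = (d i : ℝ) := by
    intro i; rw [hA, hDg, AA_diag B hcol hsupp i]; exact hd i
  have hND : B * Bᵀ = Dg - A := by rw [hA]; exact (sub_sub_cancel _ _).symm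
  have trD : ∀ M : Matrix (Fin n) (Fin n) ℝ,
      trace (Dg * M) = ∑ i, (d i : ℝ) * M i i := by
    intro M; rw [hDg', trace_diag_mul]
  -- scalar abbreviations
  set v2 : ℝ := trace (A * A) with hv2
  set v3 : ℝ := trace (A * A * A) with hv3
  -- diagonal traces
  have tDA : trace (Dg * A) = 0 := by rw [trD]; simp [hA0]
  have tAD : trace (A * Dg) = 0 := by rw [Matrix.trace_mul_comm]; exact tDA
  have tDD : trace (Dg * Dg) = ∑ i, (d i : ℝ) * (d i : ℝ) := by
    rw [trD]
    exact Finset.sum_congr rfl fun i _ => by rw [hDg', Matrix.diagonal_apply_eq]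
  have tDAA : trace (Dg * (A * A)) = ∑ i, (d i : ℝ) * (d i : ℝ) := by
    rw [trD]
    exact Finset.sum_congr rfl fun i _ => by rw [hAAd]
  have tDDD : trace (Dg * (Dg * Dg)) = ∑ i, (d i : ℝ) * ((d i : ℝ) * (d i : ℝ)) := by
    rw [trD]
    refine Finset.sum_congr rfl fun i _ => ?_
    rw [hDg', Matrix.diagonal_mul_diagonal, Matrix.diagonal_apply_eq]
  have tDDA : trace (Dg * (Dg * A)) = 0 := by
    rw [trD]
    refine Finset.sum_eq_zero fun i _ => ?_
    rw [hDg', Matrix.diagonal_mul, hA0, mul_zero, mul_zero]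
  have tDAD : trace (Dg * (A * Dg)) = 0 := by
    rw [trD]
    refine Finset.sum_eq_zero fun i _ => ?_
    rw [hDg', Matrix.mul_diagonal, hA0, zero_mul, mul_zero]
  have tADD : trace (A * (Dg * Dg)) = 0 := by
    rw [hDg', Matrix.diagonal_mul_diagonal, trace_mul_diag]
    exact Finset.sum_eq_zero fun i _ => by rw [hA0, zero_mul]
  have tADA : trace (A * (Dg * A)) = ∑ i, (d i : ℝ) * (d i : ℝ) := by
    rw [Matrix.trace_mul_comm, mul_assoc]; exact tDAA
  have tAAD : trace (A * (A * Dg)) = ∑ i, (d i : ℝ) * (d i : ℝ) := by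
    rw [← mul_assoc, Matrix.trace_mul_comm]; exact tDAA
  -- products with N = B * Bᵀ
  have hAN : trace (A * (B * Bᵀ)) = -v2 := by
    rw [hND, mul_sub, Matrix.trace_sub, tAD, hv2]; ring
  have hNA : trace ((B * Bᵀ) * A) = -v2 := by
    rw [Matrix.trace_mul_comm]; exact hAN
  have hNN : trace ((B * Bᵀ) * (B * Bᵀ)) = (∑ i, (d i : ℝ) * (d i : ℝ)) + v2 := by
    rw [hND]
    rw [show (Dg - A) * (Dg - A) = Dg*Dg - Dg*A - A*Dg + A*A by noncomm_ring]
    rw [Matrix.trace_add, Matrix.trace_sub, Matrix.trace_sub, tDD, tDA, tAD, hv2]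
    ring
  have hNNN : trace ((B * Bᵀ) * ((B * Bᵀ) * (B * Bᵀ))) =
      (∑ i, (d i : ℝ) * ((d i : ℝ) * (d i : ℝ))) + 3 * (∑ i, (d i : ℝ) * (d i : ℝ)) - v3 := by
    rw [hND]
    rw [show (Dg - A) * ((Dg - A) * (Dg - A)) =
        Dg*(Dg*Dg) - Dg*(Dg*A) - Dg*(A*Dg) + Dg*(A*A)
        - A*(Dg*Dg) + A*(Dg*A) + A*(A*Dg) - A*(A*A) by noncomm_ring]
    simp only [Matrix.trace_add, Matrix.trace_sub]
    rw [tDDD, tDDA, tDAD, tDAA, tADD, tADA, tAAD, ← mul_assoc, ← hv3]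
    ring
  -- L = Bᵀ * B facts
  have hLd : ∀ e, (Bᵀ * B) e e = 2 := by
    intro e
    rw [Matrix.mul_apply,
      show ∑ i, Bᵀ e i * B i e = ∑ i, (B i e)^2 from
        Finset.sum_congr rfl fun i _ => by rw [Matrix.transpose_apply]; ring]
    exact col_sum_sq B hcol e
  have trL : trace (Bᵀ * B) = 2 * (m : ℝ) := by
    simp [Matrix.trace, Matrix.diag, hLd, Finset.sum_const, mul_comm]
  have hs1 : ∑ i, (d i : ℝ) = 2 * (m : ℝ) := by
    have h1 : trace (B * Bᵀ) = ∑ i, (d i : ℝ) := by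
      simp only [Matrix.trace, Matrix.diag]
      exact Finset.sum_congr rfl fun i _ => hd i
    rw [← h1, Matrix.trace_mul_comm]; exact trL
  -- cyclic conversions between L-powers and N-powers
  have hLL : trace ((Bᵀ * B) * (Bᵀ * B)) = trace ((B * Bᵀ) * (B * Bᵀ)) := by
    rw [show (Bᵀ * B) * (Bᵀ * B) = Bᵀ * (B * (Bᵀ * B)) by simp only [Matrix.mul_assoc],
      Matrix.trace_mul_comm,
      show (B * (Bᵀ * B)) * Bᵀ = (B * Bᵀ) * (B * Bᵀ) by simp only [Matrix.mul_assoc]]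
  have hLLL : trace (((Bᵀ * B) * (Bᵀ * B)) * (Bᵀ * B)) =
      trace ((B * Bᵀ) * ((B * Bᵀ) * (B * Bᵀ))) := by
    rw [show ((Bᵀ * B) * (Bᵀ * B)) * (Bᵀ * B) = Bᵀ * (B * (Bᵀ * (B * (Bᵀ * B)))) by
        simp only [Matrix.mul_assoc],
      Matrix.trace_mul_comm,
      show (B * (Bᵀ * (B * (Bᵀ * B)))) * Bᵀ = (B * Bᵀ) * ((B * Bᵀ) * (B * Bᵀ)) by
        simp only [Matrix.mul_assoc]]
  -- abbreviate
  set LM : Matrix (Fin m) (Fin m) ℝ := Bᵀ * B with hLM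
  set SM : Matrix (Fin m) (Fin m) ℝ := (2:ℝ) • 1 - LM with hSM
  -- S facts
  have trS : trace SM = 0 := by
    rw [hSM, Matrix.trace_sub, Matrix.trace_smul, Matrix.trace_one, trL]
    simp [Fintype.card_fin]
  have mulS : ∀ X : Matrix (Fin m) (Fin m) ℝ,
      trace (X * SM) = 2 * trace X - trace (X * LM) := by
    intro X; rw [hSM]; exact trace_mul_smul_one_sub X LM
  have bLS : trace (LM * SM) = 2 * (2 * (m:ℝ)) - ((∑ i, (d i : ℝ) * (d i : ℝ)) + v2) := by
    rw [mulS, trL, hLL, hNN]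
  have bSL : trace (SM * LM) = trace (LM * SM) := Matrix.trace_mul_comm _ _
  have bLLL : trace ((LM * LM) * LM) =
      (∑ i, (d i : ℝ) * ((d i : ℝ) * (d i : ℝ))) + 3 * (∑ i, (d i : ℝ) * (d i : ℝ)) - v3 := by
    rw [hLLL, hNNN]
  have bLLS : trace ((LM * LM) * SM) =
      2 * ((∑ i, (d i : ℝ) * (d i : ℝ)) + v2) - trace ((LM * LM) * LM) := by
    rw [mulS, hLL, hNN]
  have bLSL : trace ((LM * SM) * LM) = trace ((LM * LM) * SM) := by
    rw [Matrix.trace_mul_comm, ← mul_assoc]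
  have bLSS : trace ((LM * SM) * SM) = 2 * trace (LM * SM) - trace ((LM * SM) * LM) := mulS _
  have bSSL : trace ((SM * SM) * LM) = trace ((LM * SM) * SM) := by
    rw [Matrix.trace_mul_comm, ← mul_assoc]
  have bSS : trace (SM * SM) = 2 * trace SM - trace (SM * LM) := mulS _
  have bSSS : trace ((SM * SM) * SM) = 2 * trace (SM * SM) - trace ((SM * SM) * LM) := mulS _
  -- the choose sum
  have hch : 6 * ∑ i : Fin n, ((Nat.choose (d i + 1) 3 : ℕ) : ℝ) =
      (∑ i, (d i : ℝ) * ((d i : ℝ) * (d i : ℝ))) - ∑ i, (d i : ℝ) := by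
    rw [Finset.mul_sum, ← Finset.sum_sub_distrib]
    refine Finset.sum_congr rfl fun i _ => ?_
    have h := choose_three_real (d i)
    linear_combination h
  -- expand the block product
  rw [Matrix.fromBlocks_multiply, Matrix.fromBlocks_multiply, trace_fromBlocks'_s5]
  simp only [Matrix.add_mul, Matrix.trace_add]
  -- rewrite the eight trace atoms
  have a2 : trace ((A * B) * Bᵀ) = -v2 := by rw [Matrix.mul_assoc]; exact hAN
  have a3 : trace ((B * SM) * Bᵀ) = trace (LM * SM) := by
    rw [Matrix.trace_mul_comm, ← Matrix.mul_assoc, ← hLM]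
  have a4 : trace ((Bᵀ * A) * B) = -v2 := by
    rw [Matrix.trace_mul_comm, ← Matrix.mul_assoc]; exact hNA
  have a5 : trace ((SM * Bᵀ) * B) = trace (SM * LM) := by rw [Matrix.mul_assoc, ← hLM]
  rw [a2, a3, a4, a5, hNA, ← hv3]
  rw [bSSS, bSS, bSSL, bLSS, bLSL, bLLS, bLLL, bSL, bLS, trS, hch, hs1]
  ring

/-- Signed triangle count of the combinatorial total graph:
`trace(T_C³) = 2 trace(A³) − 6 m − 6 ∑ᵢ C(dᵢ+1, 3)`, i.e. `T_C(Σ)` has exactly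
`2t⁺` positive triangles. -/
theorem combinatorial_total_graph_positive_triangles
    (n m : ℕ) (B : Matrix (Fin n) (Fin m) ℝ)
    (hcol : ∀ e : Fin m, ∃ i j : Fin n, i ≠ j ∧
      (B i e = 1 ∨ B i e = -1) ∧ (B j e = 1 ∨ B j e = -1) ∧
      ∀ k : Fin n, k ≠ i → k ≠ j → B k e = 0)
    (hsupp : ∀ e f : Fin m, (∀ i : Fin n, B i e ≠ 0 ↔ B i f ≠ 0) → e = f)
    (d : Fin n → ℕ) (hd : ∀ i : Fin n, (B * Bᵀ) i i = (d i : ℝ)) :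
    let D : Matrix (Fin n) (Fin n) ℝ := Matrix.diagonal fun i => (B * Bᵀ) i i
    let A : Matrix (Fin n) (Fin n) ℝ := D - B * Bᵀ
    let TC : Matrix (Fin n ⊕ Fin m) (Fin n ⊕ Fin m) ℝ :=
      Matrix.fromBlocks A B Bᵀ ((2 : ℝ) • 1 - Bᵀ * B)
    Matrix.trace (TC * TC * TC) =
      2 * Matrix.trace (A * A * A) - 6 * (m : ℝ) -
        6 * ∑ i : Fin n, ((Nat.choose (d i + 1) 3 : ℕ) : ℝ) := by
  intro D A TC
  exact main_aux hcol hsupp hd rfl rfl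
end

section
/- Let B : Matrix (Fin n) (Fin m) ℝ be an orientation matrix of a signed graph Σ (every column has exactly two nonzero entries, each ±1, in distinct rows; no two distinct columns have their nonzero entries in the same pair of rows), with adjacency matrix A := D − B * Bᵀ (D the diagonal of B * Bᵀ). Let T_C := Matrix.fromBlocks A B Bᵀ (2•1 − Bᵀ * B) and T_S := Matrix.fromBlocks A B Bᵀ (Bᵀ * B − 2•1). Then T_C is balanced if and only if m = 0, and T_S is balanced if and only if m = 0; that is, each total graph of Σ is balanced if and only if the underlying graph is totally disconnected (has no edges). -/
/-!
Switching by a diagonal `±1` matrix `S` multiplies `M a b` by `S a a * S b b`, so it preserves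
the product of the entries around any closed walk; a matrix that can be switched to a nonnegative
one therefore has nonnegative products around triangles. If `Σ` has an edge `e = ij`, the total
graph contains the triangle `i, e, j`, whose entries are `B i e`, `B j e` and
`A j i = -(B i e * B j e)` (the last because `e` is the only edge joining `i` and `j`); their
product `-(B i e * B j e) ^ 2` is negative. Without edges the total graph is the zero matrix.
-/

open Matrix

namespace Matrix

variable {ι : Type*} [Fintype ι] [DecidableEq ι]

def IsBalanced (M : Matrix ι ι ℝ) : Prop :=
  ∃ S : Matrix ι ι ℝ, (∀ i j, i ≠ j → S i j = 0) ∧ (∀ i, S i i = 1 ∨ S i i = -1) ∧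
    ∀ i j, 0 ≤ (S * M * S) i j

theorem isBalanced_of_nonneg {M : Matrix ι ι ℝ} (hM : ∀ i j, 0 ≤ M i j) : M.IsBalanced :=
  ⟨1, fun _ _ h => one_apply_ne h, fun i => Or.inl (one_apply_eq i), by simpa using hM⟩

theorem IsBalanced.mul_mul_nonneg {M : Matrix ι ι ℝ} (hM : M.IsBalanced) (a b c : ι) :
    0 ≤ M a b * M b c * M c a := by
  obtain ⟨S, hdiag, hsign, hnonneg⟩ := hM
  have hS : diagonal (diag S) = S := IsDiag.diagonal_diag fun i j h => hdiag i j h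
  have hswitch : ∀ x y, (S * M * S) x y = S x x * M x y * S y y := fun x y => by
    rw [← hS, mul_diagonal, diagonal_mul]; simp
  have hsq : (S a a * S b b * S c c) ^ 2 = 1 := by
    rcases hsign a with ha | ha <;> rcases hsign b with hb | hb <;> rcases hsign c with hc | hc <;>
      simp [ha, hb, hc]
  have hprod : (S * M * S) a b * (S * M * S) b c * (S * M * S) c a = M a b * M b c * M c a := by
    simp only [hswitch]
    linear_combination (M a b * M b c * M c a) * hsq
  rw [← hprod]
  exact mul_nonneg (mul_nonneg (hnonneg a b) (hnonneg b c)) (hnonneg c a)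

end Matrix

theorem ne_zero_iff_eq_or_eq_of_support_subset_pair {α R : Type*} [Zero R] {v : α → R}
    {i' j' : α} (hsupp : ∀ k, k ≠ i' → k ≠ j' → v k = 0) {i j : α} (hij : i ≠ j)
    (hi : v i ≠ 0) (hj : v j ≠ 0) (k : α) : v k ≠ 0 ↔ k = i ∨ k = j := by
  have mem_pair : ∀ x, v x ≠ 0 → x = i' ∨ x = j' := fun x hx => by
    by_contra! h; exact hx (hsupp x h.1 h.2)
  refine ⟨fun hk => ?_, by rintro (rfl | rfl) <;> assumption⟩
  rcases mem_pair i hi with rfl | rfl <;> rcases mem_pair j hj with rfl | rfl <;>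
    rcases mem_pair k hk with rfl | rfl <;> tauto

theorem mul_transpose_apply_eq_of_common_column {n m R : Type*} [Fintype m]
    [NonUnitalNonAssocSemiring R] {B : Matrix n m R}
    (hpair : ∀ f, ∃ i' j', ∀ k, k ≠ i' → k ≠ j' → B k f = 0)
    (hsupp : ∀ e f, (∀ i, B i e ≠ 0 ↔ B i f ≠ 0) → e = f)
    {i j : n} {e : m} (hij : i ≠ j) (hi : B i e ≠ 0) (hj : B j e ≠ 0) :
    (B * Bᵀ) i j = B i e * B j e := by
  obtain ⟨i', j', he⟩ := hpair e
  have support_e := ne_zero_iff_eq_or_eq_of_support_subset_pair he hij hi hj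
  rw [mul_apply]
  refine Finset.sum_eq_single e (fun f _ hfe => ?_) (by simp)
  by_contra hf
  have hif : B i f ≠ 0 := left_ne_zero_of_mul hf
  have hjf : B j f ≠ 0 := right_ne_zero_of_mul hf
  obtain ⟨i'', j'', hf'⟩ := hpair f
  have support_f := ne_zero_iff_eq_or_eq_of_support_subset_pair hf' hij hif hjf
  exact hfe (hsupp f e fun k => by rw [support_f, support_e])

theorem not_isBalanced_fromBlocks_of_triangle {n m : Type*} [Fintype n] [Fintype m]
    [DecidableEq n] [DecidableEq m] {A : Matrix n n ℝ} {B : Matrix n m ℝ} {C : Matrix m m ℝ}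
    {i j : n} {e : m} (hi : B i e ≠ 0) (hj : B j e ≠ 0) (hA : A j i = -(B i e * B j e)) :
    ¬ (fromBlocks A B Bᵀ C).IsBalanced := fun hbal => by
  have htriangle := hbal.mul_mul_nonneg (Sum.inl i) (Sum.inr e) (Sum.inl j)
  simp only [fromBlocks_apply₁₂, fromBlocks_apply₂₁, fromBlocks_apply₁₁, transpose_apply,
    hA] at htriangle
  have hpos : 0 < (B i e * B j e) ^ 2 := by positivity
  nlinarith

/-- Each total graph of a signed graph `Σ` is balanced if and only if the
underlying graph is totally disconnected (has no edges). -/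
theorem total_graph_balanced_iff_no_edges
    (n m : ℕ) (B : Matrix (Fin n) (Fin m) ℝ)
    (hcol : ∀ e : Fin m, ∃ i j : Fin n, i ≠ j ∧
      (B i e = 1 ∨ B i e = -1) ∧ (B j e = 1 ∨ B j e = -1) ∧
      ∀ k : Fin n, k ≠ i → k ≠ j → B k e = 0)
    (hsupp : ∀ e f : Fin m, (∀ i : Fin n, B i e ≠ 0 ↔ B i f ≠ 0) → e = f) :
    let D : Matrix (Fin n) (Fin n) ℝ := Matrix.diagonal fun i => (B * Bᵀ) i i
    let A : Matrix (Fin n) (Fin n) ℝ := D - B * Bᵀ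
    let TC : Matrix (Fin n ⊕ Fin m) (Fin n ⊕ Fin m) ℝ :=
      Matrix.fromBlocks A B Bᵀ ((2 : ℝ) • 1 - Bᵀ * B)
    let TS : Matrix (Fin n ⊕ Fin m) (Fin n ⊕ Fin m) ℝ :=
      Matrix.fromBlocks A B Bᵀ (Bᵀ * B - (2 : ℝ) • 1)
    ((∃ S : Matrix (Fin n ⊕ Fin m) (Fin n ⊕ Fin m) ℝ,
      (∀ i j, i ≠ j → S i j = 0) ∧ (∀ i, S i i = 1 ∨ S i i = -1) ∧
      ∀ i j, 0 ≤ (S * TC * S) i j) ↔ m = 0) ∧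
    ((∃ S : Matrix (Fin n ⊕ Fin m) (Fin n ⊕ Fin m) ℝ,
      (∀ i j, i ≠ j → S i j = 0) ∧ (∀ i, S i i = 1 ∨ S i i = -1) ∧
      ∀ i j, 0 ≤ (S * TS * S) i j) ↔ m = 0) := by
  intro D A _ _
  have total_graph : ∀ C, (fromBlocks A B Bᵀ C).IsBalanced ↔ m = 0 := fun C => by
    refine ⟨fun hbal => ?_, ?_⟩
    · by_contra hm
      obtain ⟨e⟩ : Nonempty (Fin m) := ⟨⟨0, Nat.pos_of_ne_zero hm⟩⟩
      obtain ⟨i, j, hij, hi, hj, -⟩ := hcol e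
      have hi0 : B i e ≠ 0 := by rcases hi with h | h <;> simp [h]
      have hj0 : B j e ≠ 0 := by rcases hj with h | h <;> simp [h]
      have hpair : ∀ f, ∃ i' j', ∀ k, k ≠ i' → k ≠ j' → B k f = 0 := fun f => by
        obtain ⟨i', j', -, -, -, hf⟩ := hcol f
        exact ⟨i', j', hf⟩
      have hA : A j i = -(B i e * B j e) := by
        simp only [A, D, Matrix.sub_apply, diagonal_apply_ne _ hij.symm]
        rw [mul_transpose_apply_eq_of_common_column hpair hsupp hij.symm hj0 hi0]
        ring
      exact not_isBalanced_fromBlocks_of_triangle hi0 hj0 hA hbal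
    · rintro rfl
      have hB : B = 0 := Subsingleton.elim _ _
      refine isBalanced_of_nonneg ?_
      rintro (i | i) (j | j)
      · simp [A, D, hB]
      all_goals exact Fin.elim0 ‹Fin 0›
  exact ⟨total_graph _, total_graph _⟩
end

section
/- Let B : Matrix (Fin n) (Fin m) ℝ be an orientation matrix of a signed graph Σ (every column has exactly two nonzero entries, each ±1, in distinct rows; no two distinct columns have their nonzero entries in the same pair of rows), with adjacency matrix A := D − B * Bᵀ (D the diagonal of B * Bᵀ). Let T_S := Matrix.fromBlocks A B Bᵀ (Bᵀ * B − 2•1) be the adjacency matrix of the spectral total graph of Σ. Then T_S is antibalanced if and only if Σ has no two adjacent edges, i.e., if and only if no two distinct columns of B have a nonzero entry in a common row (equivalently, Bᵀ * B = 2•1). -/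
open Matrix

set_option maxHeartbeats 1000000

private lemma diag_conj {ι : Type*} [Fintype ι] [DecidableEq ι] (S T : Matrix ι ι ℝ)
    (h0 : ∀ i j, i ≠ j → S i j = 0) (a b : ι) :
    (S * T * S) a b = S a a * T a b * S b b := by
  have h1 : (S * T * S) a b = ∑ d, (S * T) a d * S d b := Matrix.mul_apply
  rw [h1, Finset.sum_eq_single b (fun d _ hd => by rw [h0 d b hd, mul_zero])
    (fun h => absurd (Finset.mem_univ b) h)]
  have h2 : (S * T) a b = ∑ c, S a c * T c b := Matrix.mul_apply
  rw [h2, Finset.sum_eq_single a (fun c _ hc => by rw [h0 a c (Ne.symm hc), zero_mul])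
    (fun h => absurd (Finset.mem_univ a) h)]

private lemma shared_unique {n m : ℕ} (B : Matrix (Fin n) (Fin m) ℝ)
    (hcol : ∀ e : Fin m, ∃ i j : Fin n, i ≠ j ∧
      (B i e = 1 ∨ B i e = -1) ∧ (B j e = 1 ∨ B j e = -1) ∧
      ∀ k : Fin n, k ≠ i → k ≠ j → B k e = 0)
    (hsupp : ∀ e f : Fin m, (∀ i : Fin n, B i e ≠ 0 ↔ B i f ≠ 0) → e = f)
    {e f : Fin m} {i k : Fin n} (hef : e ≠ f)
    (hie : B i e ≠ 0) (hif : B i f ≠ 0) (hke : B k e ≠ 0) (hkf : B k f ≠ 0) :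
    i = k := by
  by_contra hik
  refine hef (hsupp e f ?_)
  obtain ⟨a, b, hab, ha, hb, hz⟩ := hcol e
  obtain ⟨a', b', hab', ha', hb', hz'⟩ := hcol f
  have se : ∀ l, B l e ≠ 0 ↔ (l = a ∨ l = b) := by
    intro l
    constructor
    · intro h; by_contra hc; push_neg at hc; exact h (hz l hc.1 hc.2)
    · rintro (rfl | rfl)
      · rcases ha with h | h <;> simp [h]
      · rcases hb with h | h <;> simp [h]
  have sf : ∀ l, B l f ≠ 0 ↔ (l = a' ∨ l = b') := by
    intro l
    constructor
    · intro h; by_contra hc; push_neg at hc; exact h (hz' l hc.1 hc.2)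
    · rintro (rfl | rfl)
      · rcases ha' with h | h <;> simp [h]
      · rcases hb' with h | h <;> simp [h]
  have h1 := (se i).1 hie
  have h2 := (se k).1 hke
  have h3 := (sf i).1 hif
  have h4 := (sf k).1 hkf
  intro l
  rw [se, sf]
  clear se sf ha hb ha' hb' hz hz' hie hif hke hkf hef hsupp
  rcases h1 with rfl | rfl <;> rcases h2 with h2 | h2 <;>
    rcases h3 with h3 | h3 <;> rcases h4 with h4 | h4 <;> subst_vars <;>
    simp_all <;> tauto

private lemma sum_shared {n m : ℕ} (B : Matrix (Fin n) (Fin m) ℝ)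
    (hcol : ∀ e : Fin m, ∃ i j : Fin n, i ≠ j ∧
      (B i e = 1 ∨ B i e = -1) ∧ (B j e = 1 ∨ B j e = -1) ∧
      ∀ k : Fin n, k ≠ i → k ≠ j → B k e = 0)
    (hsupp : ∀ e f : Fin m, (∀ i : Fin n, B i e ≠ 0 ↔ B i f ≠ 0) → e = f)
    {e f : Fin m} {i : Fin n} (hef : e ≠ f)
    (hie : B i e ≠ 0) (hif : B i f ≠ 0) :
    ∑ k, B k e * B k f = B i e * B i f := by
  refine Finset.sum_eq_single i (fun k _ hk => ?_)
    (fun h => absurd (Finset.mem_univ i) h)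
  by_contra hne
  have hke : B k e ≠ 0 := fun h => hne (by rw [h, zero_mul])
  have hkf : B k f ≠ 0 := fun h => hne (by rw [h, mul_zero])
  exact hk (shared_unique B hcol hsupp hef hie hif hke hkf).symm

/-- The spectral total graph `T_S(Σ)` is antibalanced if and only if `Σ` has no
two adjacent edges, i.e. `Bᵀ * B = 2•1`. -/
theorem spectral_total_graph_antibalanced_iff
    (n m : ℕ) (B : Matrix (Fin n) (Fin m) ℝ)
    (hcol : ∀ e : Fin m, ∃ i j : Fin n, i ≠ j ∧
      (B i e = 1 ∨ B i e = -1) ∧ (B j e = 1 ∨ B j e = -1) ∧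
      ∀ k : Fin n, k ≠ i → k ≠ j → B k e = 0)
    (hsupp : ∀ e f : Fin m, (∀ i : Fin n, B i e ≠ 0 ↔ B i f ≠ 0) → e = f) :
    let D : Matrix (Fin n) (Fin n) ℝ := Matrix.diagonal fun i => (B * Bᵀ) i i
    let A : Matrix (Fin n) (Fin n) ℝ := D - B * Bᵀ
    let TS : Matrix (Fin n ⊕ Fin m) (Fin n ⊕ Fin m) ℝ :=
      Matrix.fromBlocks A B Bᵀ (Bᵀ * B - (2 : ℝ) • 1)
    (∃ S : Matrix (Fin n ⊕ Fin m) (Fin n ⊕ Fin m) ℝ,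
      (∀ i j, i ≠ j → S i j = 0) ∧ (∀ i, S i i = 1 ∨ S i i = -1) ∧
      ∀ i j, (S * TS * S) i j ≤ 0) ↔ Bᵀ * B = (2 : ℝ) • 1 := by
  intro D A TS
  have hBtB : ∀ e f, (Bᵀ * B) e f = ∑ k, B k e * B k f := by
    intro e f
    rw [Matrix.mul_apply]
    simp [Matrix.transpose_apply]
  constructor
  · rintro ⟨S, h0, h1, hle⟩
    ext e f
    rcases eq_or_ne e f with rfl | hef
    · -- diagonal: sum of squares = 2
      obtain ⟨i, j, hij, hi, hj, hz⟩ := hcol e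
      rw [hBtB]
      have key : ∀ k, B k e * B k e =
          (if k = i then (1:ℝ) else 0) + (if k = j then 1 else 0) := by
        intro k
        by_cases hki : k = i
        · subst hki
          rcases hi with h | h <;> simp [h, hij]
        · by_cases hkj : k = j
          · subst hkj
            rcases hj with h | h <;> simp [h, hki]
          · simp [hz k hki hkj, hki, hkj]
      simp only [key, Finset.sum_add_distrib, Finset.sum_ite_eq', Finset.mem_univ, if_true]
      simp [Matrix.smul_apply, Matrix.one_apply, smul_eq_mul]
      norm_num
    · -- off-diagonal: sum = 0
      have h2f : ((2:ℝ) • (1 : Matrix (Fin m) (Fin m) ℝ)) e f = 0 := by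
        simp [Matrix.smul_apply, Matrix.one_apply_ne hef]
      rw [hBtB, h2f]
      by_contra hsum
      obtain ⟨i, -, hi⟩ := Finset.exists_ne_zero_of_sum_ne_zero hsum
      have hie : B i e ≠ 0 := left_ne_zero_of_mul hi
      have hif : B i f ≠ 0 := right_ne_zero_of_mul hi
      have hEE : TS (Sum.inr e) (Sum.inr f) = B i e * B i f := by
        show (Bᵀ * B - (2:ℝ) • (1 : Matrix (Fin m) (Fin m) ℝ)) e f = _
        rw [Matrix.sub_apply, h2f, hBtB, sum_shared B hcol hsupp hef hie hif, sub_zero]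
      have hVE : TS (Sum.inl i) (Sum.inr e) = B i e := rfl
      have hVF : TS (Sum.inl i) (Sum.inr f) = B i f := rfl
      set x := S (Sum.inl i) (Sum.inl i) with hx
      set y := S (Sum.inr e) (Sum.inr e) with hy
      set z := S (Sum.inr f) (Sum.inr f) with hz'
      have ha : x * B i e * y ≤ 0 := by
        have := hle (Sum.inl i) (Sum.inr e)
        rwa [diag_conj S TS h0, hVE] at this
      have hb : x * B i f * z ≤ 0 := by
        have := hle (Sum.inl i) (Sum.inr f)
        rwa [diag_conj S TS h0, hVF] at this
      have hc : y * (B i e * B i f) * z ≤ 0 := by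
        have := hle (Sum.inr e) (Sum.inr f)
        rwa [diag_conj S TS h0, hEE] at this
      have hx2 : x * x = 1 := by rcases h1 (Sum.inl i) with h | h <;> rw [← hx] at h <;>
        rw [h] <;> norm_num
      have hy2 : y * y = 1 := by rcases h1 (Sum.inr e) with h | h <;> rw [← hy] at h <;>
        rw [h] <;> norm_num
      have hz2 : z * z = 1 := by rcases h1 (Sum.inr f) with h | h <;> rw [← hz'] at h <;>
        rw [h] <;> norm_num
      have hprod : (x * B i e * y) * (x * B i f * z) * (y * (B i e * B i f) * z)
          = (x*x) * (y*y) * (z*z) * ((B i e * B i e) * (B i f * B i f)) := by ring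
      rw [hx2, hy2, hz2] at hprod
      have hpos : 0 < (B i e * B i e) * (B i f * B i f) :=
        mul_pos (mul_self_pos.mpr hie) (mul_self_pos.mpr hif)
      have hnn : 0 ≤ (x * B i e * y) * (x * B i f * z) := by nlinarith [ha, hb]
      nlinarith [hnn, hc, hprod, hpos]
  · intro hmatch
    -- each vertex lies in at most one edge
    have unique_edge : ∀ {e f : Fin m} {i : Fin n}, e ≠ f → B i e ≠ 0 → B i f = 0 := by
      intro e f i hef hie
      by_contra hif
      have h0 : (Bᵀ * B) e f = 0 := by
        rw [hmatch]
        simp [Matrix.smul_apply, Matrix.one_apply_ne hef]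
      rw [hBtB, sum_shared B hcol hsupp hef hie hif] at h0
      exact (mul_ne_zero hie hif) h0
    classical
    set sv : Fin n → ℝ := fun i => if h : ∃ e, B i e ≠ 0 then -B i h.choose else 1 with hsvdef
    have hsv : ∀ (i : Fin n) (e0 : Fin m), B i e0 ≠ 0 → sv i = -B i e0 := by
      intro i e0 h0
      have hex : ∃ e, B i e ≠ 0 := ⟨e0, h0⟩
      rw [hsvdef]
      simp only [dif_pos hex]
      congr 1
      by_cases hce : hex.choose = e0
      · rw [hce]
      · exact absurd (unique_edge hce hex.choose_spec) h0
    have hsv1 : ∀ i : Fin n, sv i = 1 ∨ sv i = -1 := by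
      intro i
      rw [hsvdef]
      by_cases hex : ∃ e, B i e ≠ 0
      · simp only [dif_pos hex]
        obtain ⟨a, b, hab, ha, hb, hz⟩ := hcol hex.choose
        have hne := hex.choose_spec
        by_cases hia : i = a
        · subst hia; rcases ha with h | h <;> rw [h] <;> norm_num
        · by_cases hib : i = b
          · subst hib; rcases hb with h | h <;> rw [h] <;> norm_num
          · exact absurd (hz i hia hib) hne
      · simp [dif_neg hex]
    refine ⟨Matrix.diagonal (Sum.elim sv (fun _ => 1)),
      fun i j hij => Matrix.diagonal_apply_ne _ hij, ?_, ?_⟩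
    · intro i
      rcases i with i | e
      · simpa using hsv1 i
      · simp
    · intro a b
      have hdc := diag_conj (Matrix.diagonal (Sum.elim sv (fun _ => 1))) TS
        (fun i j hij => Matrix.diagonal_apply_ne _ hij) a b
      rw [hdc, Matrix.diagonal_apply_eq, Matrix.diagonal_apply_eq]
      rcases a with i | e <;> rcases b with j | f
      · -- vertex-vertex
        simp only [Sum.elim_inl]
        have hTS : TS (Sum.inl i) (Sum.inl j) = A i j := rfl
        rw [hTS]
        rcases eq_or_ne i j with rfl | hij
        · have : A i i = 0 := by
            show D i i - (B * Bᵀ) i i = 0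
            simp [D, Matrix.diagonal_apply_eq]
          rw [this]; simp
        · have hD : D i j = 0 := Matrix.diagonal_apply_ne _ hij
          have hA : A i j = 0 - (B * Bᵀ) i j := by
            show D i j - (B * Bᵀ) i j = _
            rw [hD]
          have hBB : (B * Bᵀ) i j = ∑ e, B i e * B j e := by
            rw [Matrix.mul_apply]; simp [Matrix.transpose_apply]
          by_cases hsum : ∑ e, B i e * B j e = 0
          · rw [hA, hBB, hsum]; simp
          · obtain ⟨e0, -, he0⟩ := Finset.exists_ne_zero_of_sum_ne_zero hsum
            have hie : B i e0 ≠ 0 := left_ne_zero_of_mul he0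
            have hje : B j e0 ≠ 0 := right_ne_zero_of_mul he0
            have hsum2 : ∑ e, B i e * B j e = B i e0 * B j e0 := by
              refine Finset.sum_eq_single e0 (fun e' _ he' => ?_)
                (fun h => absurd (Finset.mem_univ e0) h)
              rw [unique_edge (Ne.symm he') hie, zero_mul]
            rw [hA, hBB, hsum2, hsv i e0 hie, hsv j e0 hje]
            nlinarith [mul_nonneg (mul_self_nonneg (B i e0)) (mul_self_nonneg (B j e0))]
      · -- vertex-edge
        simp only [Sum.elim_inl, Sum.elim_inr]
        have hTS : TS (Sum.inl i) (Sum.inr f) = B i f := rfl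
        rw [hTS]
        by_cases hif : B i f = 0
        · rw [hif]; simp
        · rw [hsv i f hif]
          nlinarith [mul_self_nonneg (B i f)]
      · -- edge-vertex
        simp only [Sum.elim_inl, Sum.elim_inr]
        have hTS : TS (Sum.inr e) (Sum.inl j) = B j e := rfl
        rw [hTS]
        by_cases hje : B j e = 0
        · rw [hje]; simp
        · rw [hsv j e hje]
          nlinarith [mul_self_nonneg (B j e)]
      · -- edge-edge
        simp only [Sum.elim_inr]
        have hTS : TS (Sum.inr e) (Sum.inr f) = 0 := by
          show (Bᵀ * B - (2:ℝ) • (1 : Matrix (Fin m) (Fin m) ℝ)) e f = 0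
          rw [hmatch]; simp
        rw [hTS]; simp
end

section
/- Let B : Matrix (Fin n) (Fin m) ℝ be an orientation matrix of a signed graph Σ (every column has exactly two nonzero entries, each ±1, in distinct rows; no two distinct columns have their nonzero entries in the same pair of rows), with adjacency matrix A := D − B * Bᵀ (D the diagonal of B * Bᵀ). Assume n ≥ 1 and that every row of B has a nonzero entry (the underlying graph has no isolated vertices). Let T be either T_C := Matrix.fromBlocks A B Bᵀ (2•1 − Bᵀ * B) or T_S := Matrix.fromBlocks A B Bᵀ (Bᵀ * B − 2•1), and for each index i of T set δ i := ∑ j, |T i j| (the degree of vertex i of the total graph) and s i := ∑ j, |T i j| * δ j (so s i = δ i · m_i, where m_i is the average degree of the neighbours of i). Then every eigenvalue λ of T satisfies λ ≤ max over i of ( −δ i + Real.sqrt (5 * (δ i)^2 + 4 * (s i − 4)) ) / 2. -/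
open Matrix Finset

section aux

variable {n m : ℕ} {B : Matrix (Fin n) (Fin m) ℝ}

lemma Bval (hcol : ∀ e : Fin m, ∃ i j : Fin n, i ≠ j ∧
      (B i e = 1 ∨ B i e = -1) ∧ (B j e = 1 ∨ B j e = -1) ∧
      ∀ k : Fin n, k ≠ i → k ≠ j → B k e = 0)
    (v : Fin n) (e : Fin m) : B v e = 0 ∨ B v e = 1 ∨ B v e = -1 := by
  obtain ⟨a, b, hab, ha, hb, hz⟩ := hcol e
  by_cases h1 : v = a
  · subst h1; tauto
  by_cases h2 : v = b
  · subst h2; tauto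
  · exact Or.inl (hz v h1 h2)

lemma supp_two (hcol : ∀ e : Fin m, ∃ i j : Fin n, i ≠ j ∧
      (B i e = 1 ∨ B i e = -1) ∧ (B j e = 1 ∨ B j e = -1) ∧
      ∀ k : Fin n, k ≠ i → k ≠ j → B k e = 0)
    {e : Fin m} {v w : Fin n} (hvw : v ≠ w) (hv : B v e ≠ 0) (hw : B w e ≠ 0) :
    ∀ i, B i e ≠ 0 ↔ (i = v ∨ i = w) := by
  obtain ⟨a, b, hab, ha, hb, hz⟩ := hcol e
  have hane : B a e ≠ 0 := by rcases ha with h | h <;> rw [h] <;> norm_num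
  have hbne : B b e ≠ 0 := by rcases hb with h | h <;> rw [h] <;> norm_num
  have hva : v = a ∨ v = b := by
    by_contra h; push_neg at h; exact hv (hz v h.1 h.2)
  have hwa : w = a ∨ w = b := by
    by_contra h; push_neg at h; exact hw (hz w h.1 h.2)
  intro i
  constructor
  · intro hi
    have hia : i = a ∨ i = b := by
      by_contra h; push_neg at h; exact hi (hz i h.1 h.2)
    rcases hva with rfl | rfl <;> rcases hwa with rfl | rfl <;> rcases hia with rfl | rfl <;> tauto
  · rintro (rfl | rfl) <;> assumption

lemma edge_unique (hcol : ∀ e : Fin m, ∃ i j : Fin n, i ≠ j ∧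
      (B i e = 1 ∨ B i e = -1) ∧ (B j e = 1 ∨ B j e = -1) ∧
      ∀ k : Fin n, k ≠ i → k ≠ j → B k e = 0)
    (hsupp : ∀ e f : Fin m, (∀ i : Fin n, B i e ≠ 0 ↔ B i f ≠ 0) → e = f)
    {e f : Fin m} {v w : Fin n} (hvw : v ≠ w)
    (hve : B v e ≠ 0) (hwe : B w e ≠ 0) (hvf : B v f ≠ 0) (hwf : B w f ≠ 0) :
    e = f := by
  refine hsupp e f fun i => ?_
  rw [supp_two hcol hvw hve hwe i, supp_two hcol hvw hvf hwf i]

lemma BBt_eq (hcol : ∀ e : Fin m, ∃ i j : Fin n, i ≠ j ∧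
      (B i e = 1 ∨ B i e = -1) ∧ (B j e = 1 ∨ B j e = -1) ∧
      ∀ k : Fin n, k ≠ i → k ≠ j → B k e = 0)
    (hsupp : ∀ e f : Fin m, (∀ i : Fin n, B i e ≠ 0 ↔ B i f ≠ 0) → e = f)
    {v w : Fin n} (hvw : v ≠ w) {e : Fin m} (hv : B v e ≠ 0) (hw : B w e ≠ 0) :
    (B * Bᵀ) v w = B v e * B w e := by
  rw [Matrix.mul_apply]
  simp only [Matrix.transpose_apply]
  refine Finset.sum_eq_single e (fun f _ hfe => ?_) (fun h => absurd (mem_univ e) h)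
  by_contra h
  have hvf : B v f ≠ 0 := fun h0 => h (by rw [h0, zero_mul])
  have hwf : B w f ≠ 0 := fun h0 => h (by rw [h0, mul_zero])
  exact hfe (edge_unique hcol hsupp hvw hvf hwf hv hw)

lemma BBt_zero {v w : Fin n} (h : ∀ e, B v e = 0 ∨ B w e = 0) :
    (B * Bᵀ) v w = 0 := by
  rw [Matrix.mul_apply]
  simp only [Matrix.transpose_apply]
  refine Finset.sum_eq_zero fun e _ => ?_
  rcases h e with h0 | h0 <;> rw [h0] <;> ring

lemma BtB_eq (hcol : ∀ e : Fin m, ∃ i j : Fin n, i ≠ j ∧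
      (B i e = 1 ∨ B i e = -1) ∧ (B j e = 1 ∨ B j e = -1) ∧
      ∀ k : Fin n, k ≠ i → k ≠ j → B k e = 0)
    (hsupp : ∀ e f : Fin m, (∀ i : Fin n, B i e ≠ 0 ↔ B i f ≠ 0) → e = f)
    {e f : Fin m} (hef : e ≠ f) {v : Fin n} (hv : B v e ≠ 0) (hv' : B v f ≠ 0) :
    (Bᵀ * B) e f = B v e * B v f := by
  rw [Matrix.mul_apply]
  simp only [Matrix.transpose_apply]
  refine Finset.sum_eq_single v (fun u _ huv => ?_) (fun h => absurd (mem_univ v) h)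
  by_contra h
  have hue : B u e ≠ 0 := fun h0 => h (by rw [h0, zero_mul])
  have huf : B u f ≠ 0 := fun h0 => h (by rw [h0, mul_zero])
  exact hef (edge_unique hcol hsupp huv hue hv huf hv')

lemma BtB_zero {e f : Fin m} (h : ∀ v, B v e = 0 ∨ B v f = 0) :
    (Bᵀ * B) e f = 0 := by
  rw [Matrix.mul_apply]
  simp only [Matrix.transpose_apply]
  refine Finset.sum_eq_zero fun v _ => ?_
  rcases h v with h0 | h0 <;> rw [h0] <;> ring

lemma BtB_diag (hcol : ∀ e : Fin m, ∃ i j : Fin n, i ≠ j ∧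
      (B i e = 1 ∨ B i e = -1) ∧ (B j e = 1 ∨ B j e = -1) ∧
      ∀ k : Fin n, k ≠ i → k ≠ j → B k e = 0)
    (e : Fin m) : (Bᵀ * B) e e = 2 := by
  obtain ⟨a, b, hab, ha, hb, hz⟩ := hcol e
  rw [Matrix.mul_apply]
  simp only [Matrix.transpose_apply]
  have hsub : ({a, b} : Finset (Fin n)) ⊆ Finset.univ := Finset.subset_univ _
  rw [← Finset.sum_subset hsub (fun v _ hv => ?_)]
  · rw [Finset.sum_pair hab]
    rcases ha with h | h <;> rcases hb with h' | h' <;> rw [h, h'] <;> norm_num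
  · simp only [Finset.mem_insert, Finset.mem_singleton] at hv
    push_neg at hv
    rw [hz v hv.1 hv.2]; ring

lemma BBt_val (hcol : ∀ e : Fin m, ∃ i j : Fin n, i ≠ j ∧
      (B i e = 1 ∨ B i e = -1) ∧ (B j e = 1 ∨ B j e = -1) ∧
      ∀ k : Fin n, k ≠ i → k ≠ j → B k e = 0)
    (hsupp : ∀ e f : Fin m, (∀ i : Fin n, B i e ≠ 0 ↔ B i f ≠ 0) → e = f)
    {v w : Fin n} (hvw : v ≠ w) :
    (B * Bᵀ) v w = 0 ∨ (B * Bᵀ) v w = 1 ∨ (B * Bᵀ) v w = -1 := by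
  by_cases h : ∃ e, B v e ≠ 0 ∧ B w e ≠ 0
  · obtain ⟨e, hv, hw⟩ := h
    rw [BBt_eq hcol hsupp hvw hv hw]
    rcases Bval hcol v e with h1 | h1 | h1 <;> rcases Bval hcol w e with h2 | h2 | h2 <;>
      rw [h1, h2] <;> norm_num
  · push_neg at h
    left
    exact BBt_zero fun e => by
      by_cases he : B v e = 0
      · exact Or.inl he
      · exact Or.inr (h e he)

lemma BtB_val (hcol : ∀ e : Fin m, ∃ i j : Fin n, i ≠ j ∧
      (B i e = 1 ∨ B i e = -1) ∧ (B j e = 1 ∨ B j e = -1) ∧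
      ∀ k : Fin n, k ≠ i → k ≠ j → B k e = 0)
    (hsupp : ∀ e f : Fin m, (∀ i : Fin n, B i e ≠ 0 ↔ B i f ≠ 0) → e = f)
    {e f : Fin m} (hef : e ≠ f) :
    (Bᵀ * B) e f = 0 ∨ (Bᵀ * B) e f = 1 ∨ (Bᵀ * B) e f = -1 := by
  by_cases h : ∃ v, B v e ≠ 0 ∧ B v f ≠ 0
  · obtain ⟨v, hv, hv'⟩ := h
    rw [BtB_eq hcol hsupp hef hv hv']
    rcases Bval hcol v e with h1 | h1 | h1 <;> rcases Bval hcol v f with h2 | h2 | h2 <;>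
      rw [h1, h2] <;> norm_num
  · push_neg at h
    left
    exact BtB_zero fun v => by
      by_cases hv : B v e = 0
      · exact Or.inl hv
      · exact Or.inr (h v hv)

end aux

lemma key_bound {N : Type*} [Fintype N] [DecidableEq N] (T : Matrix N N ℝ)
    (hsym : ∀ i j, T i j = T j i)
    (hval : ∀ i j, T i j = 0 ∨ T i j = 1 ∨ T i j = -1)
    (htri : ∀ i : N, ∃ j k : N, j ≠ i ∧ k ≠ i ∧ j ≠ k ∧
      T i j * T j k * T k i = -1)
    (lam : ℝ) (v : N → ℝ) (hv : v ≠ 0) (heig : T.mulVec v = lam • v) :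
    ∃ i : N, lam ≤ (-(∑ j, |T i j|) +
      Real.sqrt (5 * (∑ j, |T i j|) ^ 2 +
        4 * ((∑ j, |T i j| * (∑ k, |T j k|)) - 4))) / 2 := by
  classical
  obtain ⟨iw, hiw⟩ : ∃ i, v i ≠ 0 := by
    by_contra h; push_neg at h; exact hv (funext h)
  obtain ⟨i0, -, hmax⟩ := Finset.exists_max_image (Finset.univ : Finset N)
    (fun j => |v j|) ⟨iw, Finset.mem_univ iw⟩
  have hM : 0 < |v i0| := lt_of_lt_of_le (abs_pos.2 hiw) (hmax iw (mem_univ iw))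
  set δ : N → ℝ := fun i => ∑ j, |T i j| with hδdef
  -- eigen equations
  have heig1 : ∑ j, T i0 j * v j = lam * v i0 := by
    have := congrFun heig i0
    simpa [Matrix.mulVec, dotProduct] using this
  have heig2m : (T * T).mulVec v = (lam ^ 2) • v := by
    rw [← Matrix.mulVec_mulVec, heig, Matrix.mulVec_smul, heig, smul_smul]
    norm_num [sq]
  have heig2 : ∑ j, (T * T) i0 j * v j = lam ^ 2 * v i0 := by
    have := congrFun heig2m i0
    simpa [Matrix.mulVec, dotProduct] using this
  have hkey : (lam ^ 2 + δ i0 * lam) * v i0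
      = ∑ j, ((T * T) i0 j + δ i0 * T i0 j) * v j := by
    have : ∑ j, ((T * T) i0 j + δ i0 * T i0 j) * v j
        = (∑ j, (T * T) i0 j * v j) + δ i0 * ∑ j, T i0 j * v j := by
      rw [Finset.mul_sum, ← Finset.sum_add_distrib]
      congr 1; ext j; ring
    rw [this, heig1, heig2]; ring
  -- triangle
  obtain ⟨j0, k0, hj0, hk0, hjk, hT3⟩ := htri i0
  have habs1 : |T i0 j0| = 1 := by
    rcases hval i0 j0 with h | h | h <;> simp [h] at hT3 ⊢
  have habs2 : |T j0 k0| = 1 := by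
    rcases hval j0 k0 with h | h | h <;> simp [h] at hT3 ⊢
  have habs3 : |T k0 i0| = 1 := by
    rcases hval k0 i0 with h | h | h <;> simp [h] at hT3 ⊢
  have ha2 : T i0 j0 * T i0 j0 = 1 := by
    rcases hval i0 j0 with h | h | h <;> simp [h] at habs1 ⊢
  have hc2 : T k0 i0 * T k0 i0 = 1 := by
    rcases hval k0 i0 with h | h | h <;> simp [h] at habs3 ⊢
  have hmid1 : T i0 k0 * T k0 j0 = -T i0 j0 := by
    rw [hsym i0 k0, hsym k0 j0, mul_comm]
    linear_combination T i0 j0 * hT3 - (T j0 k0 * T k0 i0) * ha2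
  have hmid2 : T i0 j0 * T j0 k0 = -T i0 k0 := by
    rw [hsym i0 k0]
    linear_combination T k0 i0 * hT3 - (T i0 j0 * T j0 k0) * hc2
  have hδ1 : 1 ≤ δ i0 := by
    have h := Finset.single_le_sum (f := fun j => |T i0 j|)
      (fun j _ => abs_nonneg _) (mem_univ j0)
    calc (1:ℝ) = |T i0 j0| := habs1.symm
      _ ≤ δ i0 := h
  have habsval : ∀ i j, |T i j| = 0 ∨ |T i j| = 1 := by
    intro i j; rcases hval i j with h | h | h <;> simp [h]
  -- generic bound
  have hGa : ∀ j, |(T * T) i0 j + δ i0 * T i0 j|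
      ≤ (∑ k, |T i0 k| * |T k j|) + δ i0 * |T i0 j| := by
    intro j
    rw [Matrix.mul_apply]
    calc |(∑ k, T i0 k * T k j) + δ i0 * T i0 j|
        ≤ |∑ k, T i0 k * T k j| + |δ i0 * T i0 j| := abs_add_le _ _
      _ ≤ (∑ k, |T i0 k * T k j|) + |δ i0 * T i0 j| := by
          gcongr; exact Finset.abs_sum_le_sum_abs _ _
      _ = (∑ k, |T i0 k| * |T k j|) + δ i0 * |T i0 j| := by
          rw [abs_mul, abs_of_nonneg (le_trans zero_le_one hδ1)]
          congr 1; exact Finset.sum_congr rfl fun k _ => abs_mul _ _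
  -- improved bound
  have hside : ∀ p q : N, |T i0 p| = 1 → |T i0 q| = 1 → |T q p| = 1 →
      T i0 q * T q p = -T i0 p →
      |(T * T) i0 p + δ i0 * T i0 p|
        ≤ ((∑ k, |T i0 k| * |T k p|) + δ i0 * |T i0 p|) - 2 := by
    intro p q h1 h2 h3 hmid
    have hrw : (T * T) i0 p + δ i0 * T i0 p
        = (∑ k ∈ Finset.univ.erase q, T i0 k * T k p) + (δ i0 - 1) * T i0 p := by
      rw [Matrix.mul_apply, ← Finset.add_sum_erase _ _ (Finset.mem_univ q), hmid]
      ring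
    have h4 : |(∑ k ∈ Finset.univ.erase q, T i0 k * T k p) + (δ i0 - 1) * T i0 p|
        ≤ (∑ k ∈ Finset.univ.erase q, |T i0 k| * |T k p|) + (δ i0 - 1) := by
      calc _ ≤ |∑ k ∈ Finset.univ.erase q, T i0 k * T k p| + |(δ i0 - 1) * T i0 p| :=
            abs_add_le _ _
        _ ≤ (∑ k ∈ Finset.univ.erase q, |T i0 k * T k p|) + |(δ i0 - 1) * T i0 p| := by
            gcongr; exact Finset.abs_sum_le_sum_abs _ _
        _ = (∑ k ∈ Finset.univ.erase q, |T i0 k| * |T k p|) + (δ i0 - 1) := by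
            rw [abs_mul, abs_of_nonneg (by linarith), h1, mul_one]
            congr 1; exact Finset.sum_congr rfl fun k _ => abs_mul _ _
    have h5 : (∑ k, |T i0 k| * |T k p|)
        = (∑ k ∈ Finset.univ.erase q, |T i0 k| * |T k p|) + 1 := by
      rw [← Finset.add_sum_erase _ _ (Finset.mem_univ q), h2, h3]
      ring
    rw [hrw, h5, h1]
    linarith
  have hb1 : |(T * T) i0 j0 + δ i0 * T i0 j0|
      ≤ ((∑ k, |T i0 k| * |T k j0|) + δ i0 * |T i0 j0|) - 2 := by
    refine hside j0 k0 habs1 (by rw [hsym i0 k0]; exact habs3) ?_ hmid1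
    rw [hsym k0 j0]; exact habs2
  have hb2 : |(T * T) i0 k0 + δ i0 * T i0 k0|
      ≤ ((∑ k, |T i0 k| * |T k k0|) + δ i0 * |T i0 k0|) - 2 := by
    exact hside k0 j0 (by rw [hsym i0 k0]; exact habs3) habs1 habs2 hmid2
  -- total sum of G
  have hsumG : ∑ j, ((∑ k, |T i0 k| * |T k j|) + δ i0 * |T i0 j|)
      = (∑ j, |T i0 j| * δ j) + δ i0 ^ 2 := by
    rw [Finset.sum_add_distrib]
    congr 1
    · rw [Finset.sum_comm]
      exact Finset.sum_congr rfl fun k _ => by rw [← Finset.mul_sum]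
    · rw [← Finset.mul_sum, sq]
  -- crux
  have hcrux : ∑ j, |(T * T) i0 j + δ i0 * T i0 j|
      ≤ (∑ j, |T i0 j| * δ j) + δ i0 ^ 2 - 4 := by
    set E : N → ℝ := fun j => |(T * T) i0 j + δ i0 * T i0 j| with hE
    set G : N → ℝ := fun j => (∑ k, |T i0 k| * |T k j|) + δ i0 * |T i0 j| with hG
    have hk0mem : k0 ∈ Finset.univ.erase j0 :=
      Finset.mem_erase.2 ⟨hjk.symm, Finset.mem_univ _⟩
    have splitE : ∑ j, E j
        = E j0 + (E k0 + ∑ j ∈ (Finset.univ.erase j0).erase k0, E j) := by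
      rw [Finset.add_sum_erase _ _ hk0mem, Finset.add_sum_erase _ _ (Finset.mem_univ j0)]
    have splitG : ∑ j, G j
        = G j0 + (G k0 + ∑ j ∈ (Finset.univ.erase j0).erase k0, G j) := by
      rw [Finset.add_sum_erase _ _ hk0mem, Finset.add_sum_erase _ _ (Finset.mem_univ j0)]
    have hrest : ∑ j ∈ (Finset.univ.erase j0).erase k0, E j
        ≤ ∑ j ∈ (Finset.univ.erase j0).erase k0, G j :=
      Finset.sum_le_sum fun j _ => hGa j
    have : ∑ j, E j ≤ ∑ j, G j - 4 := by
      rw [splitE, splitG]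
      have := hb1; have := hb2
      simp only [hE, hG] at *
      linarith
    calc ∑ j, E j ≤ ∑ j, G j - 4 := this
      _ = (∑ j, |T i0 j| * δ j) + δ i0 ^ 2 - 4 := by rw [hsumG]
  -- put together
  have hbig : |lam ^ 2 + δ i0 * lam| * |v i0|
      ≤ ((∑ j, |T i0 j| * δ j) + δ i0 ^ 2 - 4) * |v i0| := by
    calc |lam ^ 2 + δ i0 * lam| * |v i0|
        = |(lam ^ 2 + δ i0 * lam) * v i0| := (abs_mul _ _).symm
      _ = |∑ j, ((T * T) i0 j + δ i0 * T i0 j) * v j| := by rw [hkey]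
      _ ≤ ∑ j, |((T * T) i0 j + δ i0 * T i0 j) * v j| := Finset.abs_sum_le_sum_abs _ _
      _ = ∑ j, |(T * T) i0 j + δ i0 * T i0 j| * |v j| := by
          exact Finset.sum_congr rfl fun j _ => abs_mul _ _
      _ ≤ ∑ j, |(T * T) i0 j + δ i0 * T i0 j| * |v i0| := by
          refine Finset.sum_le_sum fun j _ => ?_
          exact mul_le_mul_of_nonneg_left (hmax j (mem_univ j)) (abs_nonneg _)
      _ = (∑ j, |(T * T) i0 j + δ i0 * T i0 j|) * |v i0| := by rw [Finset.sum_mul]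
      _ ≤ ((∑ j, |T i0 j| * δ j) + δ i0 ^ 2 - 4) * |v i0| :=
          mul_le_mul_of_nonneg_right hcrux (abs_nonneg _)
  have hQ : lam ^ 2 + δ i0 * lam ≤ (∑ j, |T i0 j| * δ j) + δ i0 ^ 2 - 4 := by
    have := le_of_mul_le_mul_right hbig hM
    exact le_trans (le_abs_self _) this
  refine ⟨i0, ?_⟩
  have h5 : (2 * lam + δ i0) ^ 2
      ≤ 5 * δ i0 ^ 2 + 4 * ((∑ j, |T i0 j| * δ j) - 4) := by nlinarith [hQ]
  have h6 : 2 * lam + δ i0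
      ≤ Real.sqrt (5 * δ i0 ^ 2 + 4 * ((∑ j, |T i0 j| * δ j) - 4)) := by
    calc 2 * lam + δ i0 ≤ |2 * lam + δ i0| := le_abs_self _
      _ = Real.sqrt ((2 * lam + δ i0) ^ 2) := (Real.sqrt_sq_eq_abs _).symm
      _ ≤ _ := Real.sqrt_le_sqrt h5
  have : δ i0 = ∑ j, |T i0 j| := rfl
  rw [← this]
  have : (∑ j, |T i0 j| * (∑ k, |T j k|)) = ∑ j, |T i0 j| * δ j := rfl
  rw [this]
  linarith

/-- Upper bound on the largest eigenvalue of either total graph of a signed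
graph with no isolated vertices. -/
theorem total_graph_largest_eigenvalue_bound
    (n m : ℕ) (hn : 1 ≤ n) (B : Matrix (Fin n) (Fin m) ℝ)
    (hcol : ∀ e : Fin m, ∃ i j : Fin n, i ≠ j ∧
      (B i e = 1 ∨ B i e = -1) ∧ (B j e = 1 ∨ B j e = -1) ∧
      ∀ k : Fin n, k ≠ i → k ≠ j → B k e = 0)
    (hsupp : ∀ e f : Fin m, (∀ i : Fin n, B i e ≠ 0 ↔ B i f ≠ 0) → e = f)
    (hrow : ∀ i : Fin n, ∃ e : Fin m, B i e ≠ 0) :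
    let D : Matrix (Fin n) (Fin n) ℝ := Matrix.diagonal fun i => (B * Bᵀ) i i
    let A : Matrix (Fin n) (Fin n) ℝ := D - B * Bᵀ
    let TC : Matrix (Fin n ⊕ Fin m) (Fin n ⊕ Fin m) ℝ :=
      Matrix.fromBlocks A B Bᵀ ((2 : ℝ) • 1 - Bᵀ * B)
    let TS : Matrix (Fin n ⊕ Fin m) (Fin n ⊕ Fin m) ℝ :=
      Matrix.fromBlocks A B Bᵀ (Bᵀ * B - (2 : ℝ) • 1)
    ∀ T : Matrix (Fin n ⊕ Fin m) (Fin n ⊕ Fin m) ℝ, (T = TC ∨ T = TS) →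
    let δ : Fin n ⊕ Fin m → ℝ := fun i => ∑ j, |T i j|
    let s : Fin n ⊕ Fin m → ℝ := fun i => ∑ j, |T i j| * δ j
    ∀ lam : ℝ, (∃ v : Fin n ⊕ Fin m → ℝ, v ≠ 0 ∧ T.mulVec v = lam • v) →
      lam ≤ Finset.univ.sup'
        ⟨Sum.inl ⟨0, hn⟩, Finset.mem_univ _⟩
        (fun i => (-δ i + Real.sqrt (5 * (δ i) ^ 2 + 4 * (s i - 4))) / 2) := by
  intro D A TC TS T hT δ s lam hex
  obtain ⟨v, hv, heig⟩ := hex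
  -- basic entry facts about A
  have hAdiag : ∀ a : Fin n, A a a = 0 := by
    intro a
    show (D - B * Bᵀ) a a = 0
    simp [D, Matrix.sub_apply, Matrix.diagonal_apply_eq]
  have hAoff : ∀ a b : Fin n, a ≠ b → A a b = -((B * Bᵀ) a b) := by
    intro a b hab
    show (D - B * Bᵀ) a b = _
    simp [D, Matrix.sub_apply, Matrix.diagonal_apply_ne _ hab]
  have hBBt_symm : ∀ a b : Fin n, (B * Bᵀ) a b = (B * Bᵀ) b a := by
    intro a b
    rw [Matrix.mul_apply, Matrix.mul_apply]
    exact Finset.sum_congr rfl fun f _ => by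
      rw [Matrix.transpose_apply, Matrix.transpose_apply, mul_comm]
  have hBtB_symm : ∀ e f : Fin m, (Bᵀ * B) e f = (Bᵀ * B) f e := by
    intro e f
    rw [Matrix.mul_apply, Matrix.mul_apply]
    exact Finset.sum_congr rfl fun u _ => by
      rw [Matrix.transpose_apply, Matrix.transpose_apply, mul_comm]
  have hAsym : ∀ a b : Fin n, A a b = A b a := by
    intro a b
    by_cases hab : a = b
    · subst hab; rfl
    · rw [hAoff a b hab, hAoff b a (Ne.symm hab), hBBt_symm]
  have hAval : ∀ a b : Fin n, A a b = 0 ∨ A a b = 1 ∨ A a b = -1 := by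
    intro a b
    by_cases hab : a = b
    · subst hab; exact Or.inl (hAdiag a)
    · rcases BBt_val hcol hsupp hab with h | h | h <;>
        rw [hAoff a b hab, h] <;> norm_num
  -- lower-right block facts
  have hCsym : ∀ e f : Fin m, (((2 : ℝ) • 1 - Bᵀ * B : Matrix (Fin m) (Fin m) ℝ)) e f = (((2 : ℝ) • 1 - Bᵀ * B : Matrix (Fin m) (Fin m) ℝ)) f e := by
    intro e f
    simp only [Matrix.sub_apply, Matrix.smul_apply, Matrix.one_apply, hBtB_symm e f]
    by_cases h : e = f <;> simp [h, eq_comm]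
  have hSsym : ∀ e f : Fin m, ((Bᵀ * B - (2 : ℝ) • 1 : Matrix (Fin m) (Fin m) ℝ)) e f = ((Bᵀ * B - (2 : ℝ) • 1 : Matrix (Fin m) (Fin m) ℝ)) f e := by
    intro e f
    simp only [Matrix.sub_apply, Matrix.smul_apply, Matrix.one_apply, hBtB_symm e f]
    by_cases h : e = f <;> simp [h, eq_comm]
  have hCval : ∀ e f : Fin m, (((2 : ℝ) • 1 - Bᵀ * B : Matrix (Fin m) (Fin m) ℝ)) e f = 0 ∨
      (((2 : ℝ) • 1 - Bᵀ * B : Matrix (Fin m) (Fin m) ℝ)) e f = 1 ∨ (((2 : ℝ) • 1 - Bᵀ * B : Matrix (Fin m) (Fin m) ℝ)) e f = -1 := by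
    intro e f
    by_cases hef : e = f
    · subst hef
      left
      simp [Matrix.sub_apply, Matrix.smul_apply, Matrix.one_apply_eq, BtB_diag hcol e]
    · simp only [Matrix.sub_apply, Matrix.smul_apply, Matrix.one_apply_ne hef]
      rcases BtB_val hcol hsupp hef with h | h | h <;> rw [h] <;> norm_num
  have hSval : ∀ e f : Fin m, ((Bᵀ * B - (2 : ℝ) • 1 : Matrix (Fin m) (Fin m) ℝ)) e f = 0 ∨
      ((Bᵀ * B - (2 : ℝ) • 1 : Matrix (Fin m) (Fin m) ℝ)) e f = 1 ∨ ((Bᵀ * B - (2 : ℝ) • 1 : Matrix (Fin m) (Fin m) ℝ)) e f = -1 := by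
    intro e f
    by_cases hef : e = f
    · subst hef
      left
      simp [Matrix.sub_apply, Matrix.smul_apply, Matrix.one_apply_eq, BtB_diag hcol e]
    · simp only [Matrix.sub_apply, Matrix.smul_apply, Matrix.one_apply_ne hef]
      rcases BtB_val hcol hsupp hef with h | h | h <;> rw [h] <;> norm_num
  obtain ⟨b2, hTeq, hb2sym, hb2val⟩ : ∃ b2 : Matrix (Fin m) (Fin m) ℝ,
      T = Matrix.fromBlocks A B Bᵀ b2 ∧ (∀ e f, b2 e f = b2 f e) ∧
      (∀ e f, b2 e f = 0 ∨ b2 e f = 1 ∨ b2 e f = -1) := by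
    rcases hT with rfl | rfl
    · exact ⟨((2 : ℝ) • 1 - Bᵀ * B : Matrix (Fin m) (Fin m) ℝ), rfl, hCsym, hCval⟩
    · exact ⟨(Bᵀ * B - (2 : ℝ) • 1 : Matrix (Fin m) (Fin m) ℝ), rfl, hSsym, hSval⟩
  have h11 : ∀ (a b : Fin n), T (Sum.inl a) (Sum.inl b) = A a b := by
    intro a b; rw [hTeq]; rfl
  have h12 : ∀ (a : Fin n) (f : Fin m), T (Sum.inl a) (Sum.inr f) = B a f := by
    intro a f; rw [hTeq]; rfl
  have h21 : ∀ (e : Fin m) (b : Fin n), T (Sum.inr e) (Sum.inl b) = B b e := by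
    intro e b; rw [hTeq]; rfl
  have h22 : ∀ (e f : Fin m), T (Sum.inr e) (Sum.inr f) = b2 e f := by
    intro e f; rw [hTeq]; rfl
  -- symmetry of T
  have hsym : ∀ i j, T i j = T j i := by
    rintro (a | e) (b | f)
    · rw [h11, h11]; exact hAsym a b
    · rw [h12, h21]
    · rw [h21, h12]
    · rw [h22, h22]; exact hb2sym e f
  -- entries of T in {0, 1, -1}
  have hval : ∀ i j, T i j = 0 ∨ T i j = 1 ∨ T i j = -1 := by
    rintro (a | e) (b | f)
    · rw [h11]; exact hAval a b
    · rw [h12]; exact Bval hcol a f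
    · rw [h21]; exact Bval hcol b e
    · rw [h22]; exact hb2val e f
  -- triangles
  have htri : ∀ i : Fin n ⊕ Fin m, ∃ j k, j ≠ i ∧ k ≠ i ∧ j ≠ k ∧
      T i j * T j k * T k i = -1 := by
    have hsq : ∀ (a : Fin n) (e : Fin m), B a e ≠ 0 → B a e * B a e = 1 := by
      intro a e h
      rcases Bval hcol a e with h0 | h0 | h0
      · exact absurd h0 h
      · rw [h0]; norm_num
      · rw [h0]; norm_num
    rintro (a | e)
    · obtain ⟨e, hae⟩ := hrow a
      obtain ⟨p, q, hpq, hp, hq, hz⟩ := hcol e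
      have hpe : B p e ≠ 0 := by rcases hp with h | h <;> rw [h] <;> norm_num
      have hqe : B q e ≠ 0 := by rcases hq with h | h <;> rw [h] <;> norm_num
      have hapq : a = p ∨ a = q := by
        by_contra h; push_neg at h; exact hae (hz a h.1 h.2)
      obtain ⟨b, hba, hbe⟩ : ∃ b : Fin n, b ≠ a ∧ B b e ≠ 0 := by
        rcases hapq with rfl | rfl
        · exact ⟨q, Ne.symm hpq, hqe⟩
        · exact ⟨p, hpq, hpe⟩
      refine ⟨Sum.inl b, Sum.inr e, by simp [hba], by simp, by simp, ?_⟩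
      rw [h11, h12, h21, hAoff a b (Ne.symm hba),
        BBt_eq hcol hsupp (Ne.symm hba) hae hbe]
      have h1 := hsq a e hae
      have h2 := hsq b e hbe
      linear_combination (-(B b e * B b e)) * h1 - h2
    · obtain ⟨p, q, hpq, hp, hq, hz⟩ := hcol e
      have hpe : B p e ≠ 0 := by rcases hp with h | h <;> rw [h] <;> norm_num
      have hqe : B q e ≠ 0 := by rcases hq with h | h <;> rw [h] <;> norm_num
      refine ⟨Sum.inl p, Sum.inl q, by simp, by simp, by simp [hpq], ?_⟩
      rw [h21, h11, h12, hAoff p q hpq, BBt_eq hcol hsupp hpq hpe hqe]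
      have h1 := hsq p e hpe
      have h2 := hsq q e hqe
      linear_combination (-(B q e * B q e)) * h1 - h2
  obtain ⟨i, hi⟩ := key_bound T hsym hval htri lam v hv heig
  refine le_trans hi ?_
  exact Finset.le_sup'
    (fun i => (-δ i + Real.sqrt (5 * (δ i) ^ 2 + 4 * (s i - 4))) / 2)
    (Finset.mem_univ i)
end

section
/- Let n, m be natural numbers, r : ℝ with r ≥ 2, A : Matrix (Fin n) (Fin n) ℝ a symmetric matrix, and B : Matrix (Fin n) (Fin m) ℝ with B * Bᵀ = r•1 − A. Let a : ℝ with a ≤ −1 be such that every eigenvalue λ of A satisfies a ≤ λ ≤ r (in the paper, a is the least eigenvalue of the r-regular signed graph Σ, which always satisfies a ≤ −1 when Σ has an edge and a ≥ −r). Let T_S := Matrix.fromBlocks A B Bᵀ (Bᵀ * B − 2•1). Then every eigenvalue μ of T_S satisfies (r − 2 − Real.sqrt ((r − 2*a)^2 + 4*(a + 1)))/2 ≤ μ ≤ (r − 2 + Real.sqrt ((r − 2*a)^2 + 4*(a + 1)))/2. -/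
open Matrix

/-- If a symmetric quadratic `(X - l1)(X - l2)` of `A` kills a nonzero vector,
then `l1` or `l2` is an eigenvalue of `A`. -/
private lemma aux_quad_eig {n : ℕ} (A : Matrix (Fin n) (Fin n) ℝ) (x : Fin n → ℝ)
    (hx : x ≠ 0) (l1 l2 : ℝ)
    (h : A.mulVec (A.mulVec x) - (l1 + l2) • A.mulVec x + (l1 * l2) • x = 0) :
    (∃ v, v ≠ 0 ∧ A.mulVec v = l1 • v) ∨ (∃ v, v ≠ 0 ∧ A.mulVec v = l2 • v) := by
  have h' : A.mulVec (A.mulVec x) = (l1 + l2) • A.mulVec x - (l1 * l2) • x := by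
    rw [← sub_eq_zero, ← h]; module
  by_cases hw : A.mulVec x - l2 • x = 0
  · exact Or.inr ⟨x, hx, sub_eq_zero.mp hw⟩
  · refine Or.inl ⟨A.mulVec x - l2 • x, hw, ?_⟩
    rw [Matrix.mulVec_sub, Matrix.mulVec_smul, h']
    module

/-- If the quadratic has negative discriminant, then `p(A)` is positive definite, so it
kills only the zero vector. -/
private lemma aux_posdef {n : ℕ} (A : Matrix (Fin n) (Fin n) ℝ) (hA : Aᵀ = A)
    (x : Fin n → ℝ) (s t : ℝ) (hst : s ^ 2 - 4 * t < 0)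
    (h : A.mulVec (A.mulVec x) - s • A.mulVec x + t • x = 0) : x = 0 := by
  by_contra hx
  have hsym : x ⬝ᵥ (A *ᵥ (A *ᵥ x)) = (A *ᵥ x) ⬝ᵥ (A *ᵥ x) := by
    rw [Matrix.dotProduct_mulVec]
    congr 1
    rw [← hA, Matrix.vecMul_transpose, hA]
  have hdot := congrArg (fun z => x ⬝ᵥ z) h
  simp only [dotProduct_sub, dotProduct_add, dotProduct_smul,
    dotProduct_zero, smul_eq_mul] at hdot
  rw [hsym] at hdot
  have hcs : (x ⬝ᵥ (A *ᵥ x)) ^ 2 ≤ (x ⬝ᵥ x) * ((A *ᵥ x) ⬝ᵥ (A *ᵥ x)) := by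
    have h1 : x ⬝ᵥ x = ∑ i, x i ^ 2 := by simp [dotProduct, sq]
    have h2 : (A *ᵥ x) ⬝ᵥ (A *ᵥ x) = ∑ i, (A *ᵥ x) i ^ 2 := by simp [dotProduct, sq]
    rw [h1, h2]
    exact Finset.sum_mul_sq_le_sq_mul_sq _ _ _
  have hγ0 : 0 ≤ x ⬝ᵥ x := Finset.sum_nonneg fun i _ => mul_self_nonneg _
  have hγ : 0 < x ⬝ᵥ x :=
    hγ0.lt_of_ne fun hc => hx (dotProduct_self_eq_zero.mp hc.symm)
  nlinarith [sq_nonneg (2 * (x ⬝ᵥ (A *ᵥ x)) - s * (x ⬝ᵥ x)), mul_pos hγ hγ, hdot, hcs]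

/-- Final arithmetic step. -/
private lemma aux_bounds (r a μ lam : ℝ) (hr : 2 ≤ r) (ha : a ≤ -1)
    (hal : a ≤ lam) (hlr : lam ≤ r)
    (heq : μ ^ 2 - (r - 2) * μ = lam ^ 2 - (r - 1) * lam + r) :
    (r - 2 - Real.sqrt ((r - 2 * a) ^ 2 + 4 * (a + 1))) / 2 ≤ μ ∧
      μ ≤ (r - 2 + Real.sqrt ((r - 2 * a) ^ 2 + 4 * (a + 1))) / 2 := by
  have hDS : (2 * μ - (r - 2)) ^ 2 ≤ (r - 2 * a) ^ 2 + 4 * (a + 1) := by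
    nlinarith [mul_nonneg (sub_nonneg.mpr hal) (by linarith : (0:ℝ) ≤ r - 1 - a - lam)]
  have habs : |2 * μ - (r - 2)| ≤ Real.sqrt ((r - 2 * a) ^ 2 + 4 * (a + 1)) := by
    rw [← Real.sqrt_sq_eq_abs]
    exact Real.sqrt_le_sqrt hDS
  have h2 := abs_le.mp habs
  constructor <;> linarith [h2.1, h2.2]

/-- The spectrum of the spectral total graph of an `r`-regular signed graph
lies in the stated interval determined by the least eigenvalue `a` of `A`. -/
theorem spectral_total_graph_spectrum_interval
    (n m : ℕ) (r : ℝ) (hr : 2 ≤ r)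
    (A : Matrix (Fin n) (Fin n) ℝ) (hA : Aᵀ = A)
    (B : Matrix (Fin n) (Fin m) ℝ) (hB : B * Bᵀ = r • 1 - A)
    (a : ℝ) (ha : a ≤ -1)
    (haA : ∀ lam : ℝ, (∃ v : Fin n → ℝ, v ≠ 0 ∧ A.mulVec v = lam • v) →
      a ≤ lam ∧ lam ≤ r) :
    let TS : Matrix (Fin n ⊕ Fin m) (Fin n ⊕ Fin m) ℝ :=
      Matrix.fromBlocks A B Bᵀ (Bᵀ * B - (2 : ℝ) • 1)
    ∀ μ : ℝ, (∃ v : Fin n ⊕ Fin m → ℝ, v ≠ 0 ∧ TS.mulVec v = μ • v) →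
      (r - 2 - Real.sqrt ((r - 2 * a) ^ 2 + 4 * (a + 1))) / 2 ≤ μ ∧
      μ ≤ (r - 2 + Real.sqrt ((r - 2 * a) ^ 2 + 4 * (a + 1))) / 2 := by
  intro TS μ hμ
  obtain ⟨v, hv, hvE⟩ := hμ
  set x : Fin n → ℝ := v ∘ Sum.inl with hxdef
  set y : Fin m → ℝ := v ∘ Sum.inr with hydef
  have hveq : v = Sum.elim x y := by funext i; cases i <;> rfl
  rw [hveq, show TS = Matrix.fromBlocks A B Bᵀ (Bᵀ * B - (2 : ℝ) • 1) from rfl,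
    Matrix.fromBlocks_mulVec] at hvE
  have E1 : A *ᵥ x + B *ᵥ y = μ • x := by
    funext i
    simpa using congrFun hvE (Sum.inl i)
  have E2 : Bᵀ *ᵥ x + (Bᵀ * B - (2 : ℝ) • 1) *ᵥ y = μ • y := by
    funext j
    simpa using congrFun hvE (Sum.inr j)
  by_cases hx : x = 0
  · -- then `B *ᵥ y = 0` and `μ = -2`
    have hy : y ≠ 0 := by
      intro hy0
      exact hv (by rw [hveq, hx, hy0]; funext i; cases i <;> rfl)
    have hBy : B *ᵥ y = 0 := by
      have := E1; rw [hx] at this; simpa using this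
    have hμ2 : μ = -2 := by
      have h2 : (Bᵀ * B - (2 : ℝ) • 1) *ᵥ y = μ • y := by
        have := E2; rw [hx] at this; simpa using this
      rw [Matrix.sub_mulVec, ← Matrix.mulVec_mulVec, hBy, Matrix.mulVec_zero,
        Matrix.smul_mulVec, Matrix.one_mulVec] at h2
      -- h2 : 0 - (2:ℝ) • y = μ • y
      obtain ⟨j, hj⟩ := Function.ne_iff.mp hy
      have := congrFun h2 j
      simp only [Pi.sub_apply, Pi.zero_apply, Pi.smul_apply, smul_eq_mul] at this
      have hfac : (μ + 2) * y j = 0 := by linarith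
      rcases mul_eq_zero.mp hfac with h' | h'
      · linarith
      · exact absurd h' hj
    exact aux_bounds r a μ r hr ha (by linarith) le_rfl (by rw [hμ2]; ring)
  · -- main case: derive the quadratic equation for `A` on `x`
    have hu : B *ᵥ y = μ • x - A *ᵥ x := by
      rw [eq_sub_iff_add_eq, add_comm]; exact E1
    have k1 : B *ᵥ (Bᵀ *ᵥ x) = r • x - A *ᵥ x := by
      rw [Matrix.mulVec_mulVec, hB, Matrix.sub_mulVec, Matrix.smul_mulVec,
        Matrix.one_mulVec]
    have k2 : B *ᵥ ((Bᵀ * B - (2 : ℝ) • 1) *ᵥ y) =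
        r • (B *ᵥ y) - A *ᵥ (B *ᵥ y) - (2 : ℝ) • (B *ᵥ y) := by
      rw [Matrix.sub_mulVec, ← Matrix.mulVec_mulVec y Bᵀ B, Matrix.smul_mulVec,
        Matrix.one_mulVec, Matrix.mulVec_sub, Matrix.mulVec_smul, Matrix.mulVec_mulVec,
        Matrix.mulVec_mulVec, hB, Matrix.sub_mul, Matrix.smul_mul, Matrix.one_mul,
        Matrix.sub_mulVec, Matrix.smul_mulVec, ← Matrix.mulVec_mulVec]
    have hE2' : B *ᵥ (Bᵀ *ᵥ x) + B *ᵥ ((Bᵀ * B - (2 : ℝ) • 1) *ᵥ y) = μ • (B *ᵥ y) := by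
      have := congrArg (fun z => B *ᵥ z) E2
      simpa only [Matrix.mulVec_add, Matrix.mulVec_smul] using this
    rw [k1, k2, hu] at hE2'
    rw [Matrix.mulVec_sub, Matrix.mulVec_smul] at hE2'
    -- hE2' : r•x - A*ᵥx + (r•(μ•x - A*ᵥx) - (μ•(A*ᵥx) - A*ᵥ(A*ᵥx)) - 2•(μ•x - A*ᵥx))
    --        = μ • (μ•x - A*ᵥx)
    have key : A *ᵥ (A *ᵥ x) - (r - 1) • (A *ᵥ x) + (r + r * μ - μ ^ 2 - 2 * μ) • x = 0 := by
      linear_combination (norm := module) hE2'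
    by_cases hΔ : 0 ≤ (r - 1) ^ 2 - 4 * (r + r * μ - μ ^ 2 - 2 * μ)
    · set e := Real.sqrt ((r - 1) ^ 2 - 4 * (r + r * μ - μ ^ 2 - 2 * μ)) with he_def
      have he : e ^ 2 = (r - 1) ^ 2 - 4 * (r + r * μ - μ ^ 2 - 2 * μ) := Real.sq_sqrt hΔ
      have key' : A *ᵥ (A *ᵥ x) - ((r - 1 + e) / 2 + (r - 1 - e) / 2) • (A *ᵥ x) +
          ((r - 1 + e) / 2 * ((r - 1 - e) / 2)) • x = 0 := by
        have hs : (r - 1 + e) / 2 + (r - 1 - e) / 2 = r - 1 := by ring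
        have hp : (r - 1 + e) / 2 * ((r - 1 - e) / 2) = r + r * μ - μ ^ 2 - 2 * μ := by
          have h4 : (r - 1 + e) / 2 * ((r - 1 - e) / 2) = ((r - 1) ^ 2 - e ^ 2) / 4 := by ring
          rw [h4, he]; ring
        rw [hs, hp]; exact key
      rcases aux_quad_eig A x hx _ _ key' with h | h
      · obtain ⟨hal, hlr⟩ := haA _ h
        exact aux_bounds r a μ ((r - 1 + e) / 2) hr ha hal hlr (by linear_combination -he / 4)
      · obtain ⟨hal, hlr⟩ := haA _ h
        exact aux_bounds r a μ ((r - 1 - e) / 2) hr ha hal hlr (by linear_combination -he / 4)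
    · push_neg at hΔ
      exact absurd (aux_posdef A hA x (r - 1) (r + r * μ - μ ^ 2 - 2 * μ) (by linarith) key) hx
end

section
/- Let n, m be natural numbers with n ≥ 1 and m ≥ 1, r : ℝ with r ≥ 2, A : Matrix (Fin n) (Fin n) ℝ a symmetric matrix, and B : Matrix (Fin n) (Fin m) ℝ such that A.mulVec 𝟙ₙ = r • 𝟙ₙ (every row of A sums to r), Bᵀ.mulVec 𝟙ₙ = 0 (every column of B sums to 0), and B.mulVec 𝟙ₘ = 0 (every row of B sums to 0), where 𝟙ₙ and 𝟙ₘ denote the all-ones vectors. Let T_S := Matrix.fromBlocks A B Bᵀ (Bᵀ * B − 2•1). Then a real number μ is a main eigenvalue of T_S if and only if μ = r or μ = −2; that is, T_S has exactly two main eigenvalues, r and −2. -/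
open Matrix

lemma symm_orth {N : Type*} [Fintype N] (M : Matrix N N ℝ) (hM : Mᵀ = M)
    {μ ν : ℝ} {v u : N → ℝ} (hv : M.mulVec v = μ • v) (hu : M.mulVec u = ν • u)
    (hne : μ ≠ ν) : v ⬝ᵥ u = 0 := by
  have h1 : v ⬝ᵥ M.mulVec u = M.mulVec v ⬝ᵥ u := by
    rw [Matrix.dotProduct_mulVec, ← Matrix.mulVec_transpose, hM]
  rw [hv, hu] at h1
  rw [dotProduct_smul, smul_dotProduct, smul_eq_mul, smul_eq_mul] at h1
  by_contra h
  exact hne (mul_right_cancel₀ h h1.symm)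

/-- The spectral total graph of an all-positive `r`-regular signed graph with
an Eulerian orientation has exactly two main eigenvalues: `r` and `-2`. -/
theorem spectral_total_graph_two_main_eigenvalues
    (n m : ℕ) (hn : 1 ≤ n) (hm : 1 ≤ m) (r : ℝ) (hr : 2 ≤ r)
    (A : Matrix (Fin n) (Fin n) ℝ) (hA : Aᵀ = A)
    (B : Matrix (Fin n) (Fin m) ℝ)
    (hrowA : A.mulVec (fun _ => (1 : ℝ)) = r • (fun _ => (1 : ℝ)))
    (hcolB : Bᵀ.mulVec (fun _ => (1 : ℝ)) = 0)
    (hrowB : B.mulVec (fun _ => (1 : ℝ)) = 0) :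
    let TS : Matrix (Fin n ⊕ Fin m) (Fin n ⊕ Fin m) ℝ :=
      Matrix.fromBlocks A B Bᵀ (Bᵀ * B - (2 : ℝ) • 1)
    ∀ μ : ℝ,
      (∃ v : Fin n ⊕ Fin m → ℝ, TS.mulVec v = μ • v ∧ ∑ i, v i ≠ 0) ↔
      (μ = r ∨ μ = -2) := by
  intro TS μ
  set u₁ : Fin n ⊕ Fin m → ℝ := Sum.elim (fun _ => 1) 0 with hu₁def
  set u₂ : Fin n ⊕ Fin m → ℝ := Sum.elim 0 (fun _ => 1) with hu₂def
  have hTSsymm : TSᵀ = TS := by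
    show (Matrix.fromBlocks A B Bᵀ (Bᵀ * B - (2 : ℝ) • 1))ᵀ = _
    rw [Matrix.fromBlocks_transpose, hA]
    rw [Matrix.transpose_sub, Matrix.transpose_mul, Matrix.transpose_transpose,
      Matrix.transpose_smul, Matrix.transpose_one]
  have hu₁ : TS.mulVec u₁ = r • u₁ := by
    show (Matrix.fromBlocks A B Bᵀ (Bᵀ * B - (2 : ℝ) • 1)).mulVec (Sum.elim _ _) = _
    rw [Matrix.fromBlocks_mulVec]
    ext (i | j) <;>
      simp [hu₁def, hrowA, hcolB, Matrix.mulVec_zero, Pi.smul_apply]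
  have hu₂ : TS.mulVec u₂ = (-2 : ℝ) • u₂ := by
    show (Matrix.fromBlocks A B Bᵀ (Bᵀ * B - (2 : ℝ) • 1)).mulVec (Sum.elim _ _) = _
    rw [Matrix.fromBlocks_mulVec]
    have hBB : (Bᵀ * B).mulVec (fun _ => (1 : ℝ)) = 0 := by
      rw [← Matrix.mulVec_mulVec, hrowB, Matrix.mulVec_zero]
    ext (i | j) <;>
      simp [hu₂def, hrowB, hBB, Matrix.sub_mulVec, Matrix.mulVec_zero, Matrix.smul_mulVec,
        Matrix.one_mulVec, Pi.smul_apply]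
  constructor
  · rintro ⟨v, hv, hsum⟩
    by_contra hcon
    push_neg at hcon
    obtain ⟨h1, h2⟩ := hcon
    have o1 : v ⬝ᵥ u₁ = 0 := symm_orth TS hTSsymm hv hu₁ h1
    have o2 : v ⬝ᵥ u₂ = 0 := symm_orth TS hTSsymm hv hu₂ h2
    apply hsum
    have : ∑ i, v i = v ⬝ᵥ u₁ + v ⬝ᵥ u₂ := by
      rw [← dotProduct_add]
      simp only [dotProduct, hu₁def, hu₂def]
      refine Finset.sum_congr rfl fun i _ => ?_
      cases i <;> simp
    rw [this, o1, o2, add_zero]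
  · rintro (rfl | rfl)
    · refine ⟨u₁, hu₁, ?_⟩
      have : ∑ i, u₁ i = (n : ℝ) := by
        simp [hu₁def, Fintype.sum_sum_type]
      rw [this]
      exact Nat.cast_ne_zero.mpr (Nat.one_le_iff_ne_zero.mp hn)
    · refine ⟨u₂, hu₂, ?_⟩
      have : ∑ i, u₂ i = (m : ℝ) := by
        simp [hu₂def, Fintype.sum_sum_type]
      rw [this]
      exact Nat.cast_ne_zero.mpr (Nat.one_le_iff_ne_zero.mp hm)
end
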